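/- arXiv:2112.02445 — 8 statements merged into one kernel-verified Lean document; each statement's English description precedes it below -/
import Mathlib

section
/- Let λ > 0 and let Î_λ = [x_rep, 1] where x_rep = 1 + λ/2 − √(λ + λ²/4). Then Î_λ is a trapping interval for the inverse maps: F_0^{-1}(Î_λ) ⊆ Î_λ and F_λ^{-1}(Î_λ) ⊆ Î_λ. -/
/-- `Î_λ = [x_rep, 1]` is a trapping interval for the inverse maps
`F_0⁻¹(y) = 1/(2 − y)` and `F_λ⁻¹(y) = 1/(2 + λ − y)`. -/
theorem stmt3 (lam : ℝ) (hlam : 0 < lam)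
    (xrep : ℝ) (hrep : xrep = 1 + lam / 2 - Real.sqrt (lam + lam ^ 2 / 4))
    (F0inv Flaminv : ℝ → ℝ)
    (h0 : ∀ y, F0inv y = 1 / (2 - y)) (hl : ∀ y, Flaminv y = 1 / (2 + lam - y)) :
    (∀ x ∈ Set.Icc xrep (1 : ℝ), F0inv x ∈ Set.Icc xrep (1 : ℝ)) ∧
    (∀ x ∈ Set.Icc xrep (1 : ℝ), Flaminv x ∈ Set.Icc xrep (1 : ℝ)) := by
  set s := Real.sqrt (lam + lam ^ 2 / 4) with hs
  have hsnn : 0 ≤ s := Real.sqrt_nonneg _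
  have hs2 : s ^ 2 = lam + lam ^ 2 / 4 := by
    rw [hs, Real.sq_sqrt]; nlinarith
  have hs_gt : lam / 2 < s := by nlinarith
  have hs_lt : s < 1 + lam / 2 := by nlinarith
  have hx_pos : 0 < xrep := by rw [hrep]; linarith
  have hx_lt : xrep < 1 := by rw [hrep]; linarith
  have hfix : xrep * (2 + lam - xrep) = 1 := by rw [hrep]; nlinarith
  constructor
  · intro x hx
    obtain ⟨hx1, hx2⟩ := hx
    have hden : 0 < 2 - x := by linarith
    rw [h0]
    constructor
    · rw [le_div_iff₀ hden]; nlinarith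
    · rw [div_le_one hden]; linarith
  · intro x hx
    obtain ⟨hx1, hx2⟩ := hx
    have hden : 0 < 2 + lam - x := by linarith
    rw [hl]
    constructor
    · rw [le_div_iff₀ hden]; nlinarith
    · rw [div_le_one hden]; linarith
end

section
/- Let λ > 0 satisfy (1−λ)√(λ + λ²/4) − λ/2 − λ²/2 > 0. Then for all sufficiently small a > 0 and δ > 0, the interval I_{λ,a,δ} = [1+δ, x_att(λ−a)] satisfies I_{λ,a,δ} ⊆ F_{−a}(I_{λ,a,δ}) ∪ F_{λ−a}(I_{λ,a,δ}); equivalently, every x ∈ I_{λ,a,δ} has F_{−a}^{-1}(x) ∈ I_{λ,a,δ} or F_{λ−a}^{-1}(x) ∈ I_{λ,a,δ}. -/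
set_option maxHeartbeats 1000000


/-- Under the condition `(1−λ)√(λ+λ²/4) − λ/2 − λ²/2 > 0`, for all sufficiently
small `a, δ > 0`, every `x ∈ I_{λ,a,δ} = [1+δ, x_att(λ−a)]` has `F_{−a}⁻¹(x) ∈ I_{λ,a,δ}` or
`F_{λ−a}⁻¹(x) ∈ I_{λ,a,δ}`, where `F_b⁻¹(y) = 1/(2 + b − y)`. -/
theorem stmt7 (lam : ℝ) (hlam : 0 < lam)
    (hcond : (1 - lam) * Real.sqrt (lam + lam ^ 2 / 4) - lam / 2 - lam ^ 2 / 2 > 0) :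
    ∃ a0 > (0 : ℝ), ∃ δ0 > (0 : ℝ), ∀ a ∈ Set.Ioo (0 : ℝ) a0, ∀ δ ∈ Set.Ioo (0 : ℝ) δ0,
      ∀ x ∈ Set.Icc (1 + δ)
          (1 + (lam - a) / 2 + Real.sqrt ((lam - a) + (lam - a) ^ 2 / 4)),
        1 / (2 - a - x) ∈ Set.Icc (1 + δ)
            (1 + (lam - a) / 2 + Real.sqrt ((lam - a) + (lam - a) ^ 2 / 4)) ∨
        1 / (2 + (lam - a) - x) ∈ Set.Icc (1 + δ)
            (1 + (lam - a) / 2 + Real.sqrt ((lam - a) + (lam - a) ^ 2 / 4)) := by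
  have hsum_pos : (0:ℝ) < lam + lam ^ 2 / 4 := by positivity
  have hs2 : (Real.sqrt (lam + lam ^ 2 / 4)) ^ 2 = lam + lam ^ 2 / 4 :=
    Real.sq_sqrt hsum_pos.le
  have hs_pos : 0 < Real.sqrt (lam + lam ^ 2 / 4) := Real.sqrt_pos.mpr hsum_pos
  obtain ⟨s, hs_def⟩ : ∃ s : ℝ, Real.sqrt (lam + lam ^ 2 / 4) = s := ⟨_, rfl⟩
  rw [hs_def] at hcond hs2 hs_pos
  have h1lam : 0 < 1 - lam := by nlinarith
  have hXs1 : (1:ℝ) < 1 + lam / 2 + s := by nlinarith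
  have hXs0 : (0:ℝ) < 1 + lam / 2 + s := by linarith
  obtain ⟨eps, heps_def⟩ : ∃ e : ℝ, e = 1 - lam - 1 / (1 + lam / 2 + s) := ⟨_, rfl⟩
  have heps : 0 < eps := by
    have h : (1 - lam) * (1 + lam / 2 + s) - 1 > 0 := by nlinarith
    have h2 : 1 / (1 + lam / 2 + s) < 1 - lam := by
      rw [div_lt_iff₀ hXs0]; nlinarith
    rw [heps_def]; linarith
  refine ⟨min (lam / 2) (min (eps / 2) (eps ^ 2 / (16 * (1 + lam / 2)))), by positivity,
    eps / 4, by positivity, ?_⟩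
  rintro a ⟨ha0, ha1⟩ δ ⟨hδ0, hδ1⟩ x hx
  have ha_lam : a < lam / 2 := lt_of_lt_of_le ha1 (min_le_left _ _)
  have ha_eps : a < eps / 2 := lt_of_lt_of_le ha1 ((min_le_right _ _).trans (min_le_left _ _))
  have ha_eps2 : a < eps ^ 2 / (16 * (1 + lam / 2)) :=
    lt_of_lt_of_le ha1 ((min_le_right _ _).trans (min_le_right _ _))
  have hb_pos : 0 < lam - a := by linarith
  have hbsum_pos : (0:ℝ) < (lam - a) + (lam - a) ^ 2 / 4 := by positivity
  have hsb2 : (Real.sqrt ((lam - a) + (lam - a) ^ 2 / 4)) ^ 2 = (lam - a) + (lam - a) ^ 2 / 4 :=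
    Real.sq_sqrt hbsum_pos.le
  have hsb_pos : 0 < Real.sqrt ((lam - a) + (lam - a) ^ 2 / 4) := Real.sqrt_pos.mpr hbsum_pos
  have hsb_le : Real.sqrt ((lam - a) + (lam - a) ^ 2 / 4) ≤ s := by
    rw [← hs_def]
    exact Real.sqrt_le_sqrt (by nlinarith)
  obtain ⟨sb, hsb_def⟩ : ∃ t : ℝ, Real.sqrt ((lam - a) + (lam - a) ^ 2 / 4) = t := ⟨_, rfl⟩
  rw [hsb_def] at hsb2 hsb_pos hsb_le hx ⊢
  obtain ⟨hx1, hx2⟩ := hx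
  have hX1 : (1:ℝ) < 1 + (lam - a) / 2 + sb := by nlinarith
  have hX0 : (0:ℝ) < 1 + (lam - a) / 2 + sb := by linarith
  have hfix : (1 + (lam - a) / 2 + sb) * (2 + (lam - a) - (1 + (lam - a) / 2 + sb)) = 1 := by
    linear_combination -hsb2
  -- s - sb ≤ eps / 4
  have hdiff : s - sb ≤ eps / 4 := by
    have h1 : (s - sb) * (s + sb) = a + a * (lam + (lam - a)) / 4 := by nlinarith
    have h2 : (s - sb) ^ 2 ≤ a * (1 + lam / 2) := by nlinarith
    have h3 : a * (1 + lam / 2) ≤ (eps / 4) ^ 2 := by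
      have h16 : (0:ℝ) < 16 * (1 + lam / 2) := by positivity
      rw [lt_div_iff₀ h16] at ha_eps2
      nlinarith
    nlinarith
  have hXdiff : (1 + lam / 2 + s) - (1 + (lam - a) / 2 + sb) ≤ eps / 2 := by linarith
  have hXle : 1 + (lam - a) / 2 + sb ≤ 1 + lam / 2 + s := by linarith
  have h1δ : (0:ℝ) < 1 + δ := by linarith
  -- key inequality: lam + 1/X < 1/(1+δ)
  have hK : lam + 1 / (1 + (lam - a) / 2 + sb) < 1 / (1 + δ) := by
    have hXXs : (1:ℝ) ≤ (1 + (lam - a) / 2 + sb) * (1 + lam / 2 + s) := by nlinarith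
    have h1 : 1 / (1 + (lam - a) / 2 + sb) - 1 / (1 + lam / 2 + s)
        = ((1 + lam / 2 + s) - (1 + (lam - a) / 2 + sb))
          / ((1 + (lam - a) / 2 + sb) * (1 + lam / 2 + s)) := by
      field_simp
    have h2 : 1 / (1 + (lam - a) / 2 + sb) ≤ 1 / (1 + lam / 2 + s) + eps / 2 := by
      have hds : ((1 + lam / 2 + s) - (1 + (lam - a) / 2 + sb))
          / ((1 + (lam - a) / 2 + sb) * (1 + lam / 2 + s))
          ≤ (1 + lam / 2 + s) - (1 + (lam - a) / 2 + sb) :=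
        div_le_self (by linarith) hXXs
      linarith
    have h3 : 1 - δ < 1 / (1 + δ) := by
      rw [lt_div_iff₀ h1δ]; nlinarith
    have hδe : δ < eps / 4 := hδ1
    rw [heps_def] at heps hδe h2
    linarith
  have hinvX : (0:ℝ) < 1 / (1 + (lam - a) / 2 + sb) := by positivity
  by_cases hcase : x ≤ 2 - a - 1 / (1 + (lam - a) / 2 + sb)
  · left
    have hd_pos : 0 < 2 - a - x := by linarith
    constructor
    · rw [le_div_iff₀ hd_pos]
      have hm : (1 + δ) * (2 - a - x) ≤ (1 + δ) * (1 - δ) :=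
        mul_le_mul_of_nonneg_left (by linarith) (by linarith)
      nlinarith [hm, sq_nonneg δ]
    · rw [div_le_iff₀ hd_pos]
      have h1X : (1 + (lam - a) / 2 + sb) * (1 / (1 + (lam - a) / 2 + sb)) = 1 := by
        field_simp
      have hm : (1 + (lam - a) / 2 + sb) * x
          ≤ (1 + (lam - a) / 2 + sb) * (2 - a - 1 / (1 + (lam - a) / 2 + sb)) :=
        mul_le_mul_of_nonneg_left hcase hX0.le
      calc (1:ℝ) = (1 + (lam - a) / 2 + sb) * (1 / (1 + (lam - a) / 2 + sb)) := h1X.symm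
        _ = (1 + (lam - a) / 2 + sb) * (2 - a)
            - (1 + (lam - a) / 2 + sb) * (2 - a - 1 / (1 + (lam - a) / 2 + sb)) := by ring
        _ ≤ (1 + (lam - a) / 2 + sb) * (2 - a) - (1 + (lam - a) / 2 + sb) * x := by
            linarith
        _ = (1 + (lam - a) / 2 + sb) * (2 - a - x) := by ring
  · right
    push_neg at hcase
    have h2bX : 2 + (lam - a) - (1 + (lam - a) / 2 + sb) = 1 / (1 + (lam - a) / 2 + sb) := by
      rw [eq_div_iff (ne_of_gt hX0)]; linear_combination hfix
    have hd_pos : 0 < 2 + (lam - a) - x := by linarith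
    constructor
    · rw [le_div_iff₀ hd_pos]
      have h1 : 2 + (lam - a) - x < lam + 1 / (1 + (lam - a) / 2 + sb) := by linarith
      have h2 : (1 + δ) * (1 / (1 + δ)) = 1 := by field_simp
      have hm : (1 + δ) * (2 + (lam - a) - x) < (1 + δ) * (1 / (1 + δ)) :=
        mul_lt_mul_of_pos_left (h1.trans hK) h1δ
      linarith
    · rw [div_le_iff₀ hd_pos]
      have hm : (1 + (lam - a) / 2 + sb) * (2 + (lam - a) - (1 + (lam - a) / 2 + sb))
          ≤ (1 + (lam - a) / 2 + sb) * (2 + (lam - a) - x) :=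
        mul_le_mul_of_nonneg_left (by linarith) hX0.le
      linarith
end

section
/- Let λ > 0 satisfy √(λ + λ²/4) > 3λ/2. Then for all sufficiently small a > 0 and δ > 0, the interval Î_{λ,a,δ} = [x_rep(λ−a), 1−δ] satisfies Î_{λ,a,δ} ⊆ F_{−a}^{-1}(Î_{λ,a,δ}) ∪ F_{λ−a}^{-1}(Î_{λ,a,δ}). -/
set_option maxHeartbeats 1000000 in
/-- Under `√(λ+λ²/4) > 3λ/2`, for all sufficiently small `a, δ > 0`, every
`x ∈ Î_{λ,a,δ} = [x_rep(λ−a), 1−δ]` satisfies `F_{−a}(x) ∈ Î_{λ,a,δ}` or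
`F_{λ−a}(x) ∈ Î_{λ,a,δ}` (i.e. `Î ⊆ F_{−a}⁻¹(Î) ∪ F_{λ−a}⁻¹(Î)`), where
`F_b(x) = 2 + b − 1/x`. -/
theorem stmt8 (lam : ℝ) (hlam : 0 < lam)
    (hcond : Real.sqrt (lam + lam ^ 2 / 4) > 3 * lam / 2) :
    ∃ a0 > (0 : ℝ), ∃ δ0 > (0 : ℝ), ∀ a ∈ Set.Ioo (0 : ℝ) a0, ∀ δ ∈ Set.Ioo (0 : ℝ) δ0,
      ∀ x ∈ Set.Icc
          (1 + (lam - a) / 2 - Real.sqrt ((lam - a) + (lam - a) ^ 2 / 4)) (1 - δ),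
        2 - a - 1 / x ∈ Set.Icc
            (1 + (lam - a) / 2 - Real.sqrt ((lam - a) + (lam - a) ^ 2 / 4)) (1 - δ) ∨
        2 + (lam - a) - 1 / x ∈ Set.Icc
            (1 + (lam - a) / 2 - Real.sqrt ((lam - a) + (lam - a) ^ 2 / 4)) (1 - δ) := by
  -- From the hypothesis, `lam + lam²/4 > (3 lam/2)²`, hence `lam < 1/2`.
  have hc2 : lam + lam ^ 2 / 4 > (3 * lam / 2) ^ 2 := by
    nlinarith [Real.sq_sqrt (show (0:ℝ) ≤ lam + lam ^ 2 / 4 by positivity),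
      Real.sqrt_nonneg (lam + lam ^ 2 / 4), hcond, hlam]
  set ε := lam - 2 * lam ^ 2 with hε_def
  have hε : 0 < ε := by nlinarith
  have hlam_half : lam < 1 / 2 := by nlinarith
  refine ⟨min (ε / 4) (lam / 2), lt_min (by positivity) (by positivity),
    min (ε / (8 * (3 * lam + 1))) 1, lt_min (by positivity) one_pos, ?_⟩
  rintro a ⟨ha0, ha1⟩ δ ⟨hδ0, hδ1⟩ x ⟨hx1, hx2⟩
  have ha_e4 : a < ε / 4 := lt_of_lt_of_le ha1 (min_le_left _ _)
  have ha_l2 : a < lam / 2 := lt_of_lt_of_le ha1 (min_le_right _ _)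
  have hδe : δ < ε / (8 * (3 * lam + 1)) := lt_of_lt_of_le hδ1 (min_le_left _ _)
  have hδlt1 : δ < 1 := lt_of_lt_of_le hδ1 (min_le_right _ _)
  have hb : 0 < lam - a := by linarith
  set s := Real.sqrt ((lam - a) + (lam - a) ^ 2 / 4) with hs_def
  have hs0 : 0 ≤ s := Real.sqrt_nonneg _
  have hs2 : s ^ 2 = (lam - a) + (lam - a) ^ 2 / 4 := Real.sq_sqrt (by positivity)
  have hδb : δ * (8 * (3 * lam + 1)) < ε :=
    (lt_div_iff₀ (by positivity)).mp hδe
  -- Key quantitative inequality: `s ≥ 3λ/2 + δ`.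
  have hkey : 3 * lam / 2 + δ ≤ s := by
    rw [hs_def]
    calc 3 * lam / 2 + δ = Real.sqrt ((3 * lam / 2 + δ) ^ 2) :=
          (Real.sqrt_sq (by positivity)).symm
      _ ≤ Real.sqrt ((lam - a) + (lam - a) ^ 2 / 4) := by
          apply Real.sqrt_le_sqrt
          nlinarith [sq_nonneg a, mul_pos ha0 hlam, mul_pos hδ0 hlam,
            mul_lt_mul_of_pos_left hlam_half ha0, mul_lt_of_lt_one_right hδ0 hδlt1]
  -- The repelling fixed point is positive.
  have hxr_pos : 0 < 1 + (lam - a) / 2 - s := by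
    have h1 : s < 1 + (lam - a) / 2 := by
      have := Real.sqrt_lt_sqrt (by positivity : (0:ℝ) ≤ (lam - a) + (lam - a) ^ 2 / 4)
        (show (lam - a) + (lam - a) ^ 2 / 4 < (1 + (lam - a) / 2) ^ 2 by nlinarith)
      rwa [Real.sqrt_sq (by linarith)] at this
    linarith
  have hx_pos : 0 < x := lt_of_lt_of_le hxr_pos hx1
  have h1δ : 0 < 1 - δ := lt_of_lt_of_le hx_pos hx2
  -- Fixed point identity: xr * (2 + b - xr) = 1.
  have hfix : (1 + (lam - a) / 2 - s) * (2 + (lam - a) - (1 + (lam - a) / 2 - s)) = 1 := by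
    linear_combination -hs2
  by_cases hcase : 2 + (lam - a) - 1 / x ≤ 1 - δ
  · right
    refine ⟨?_, hcase⟩
    have hinv : 1 / x ≤ 1 / (1 + (lam - a) / 2 - s) :=
      one_div_le_one_div_of_le hxr_pos hx1
    have h2 : 1 / (1 + (lam - a) / 2 - s) = 2 + (lam - a) - (1 + (lam - a) / 2 - s) := by
      rw [div_eq_iff (ne_of_gt hxr_pos)]
      linarith [hfix]
    rw [h2] at hinv
    linarith
  · left
    push_neg at hcase
    have h1x : 1 / x < 1 + (lam - a) + δ := by linarith
    constructor
    · -- lower bound: xr ≤ 1 - lam - δ, using hkey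
      have hxr_le : 1 + (lam - a) / 2 - s ≤ 1 - lam - δ := by linarith
      linarith
    · have hinv : 1 / (1 - δ) ≤ 1 / x := one_div_le_one_div_of_le hx_pos hx2
      have h2 : (1:ℝ) + δ ≤ 1 / (1 - δ) := by
        rw [le_div_iff₀ h1δ]; nlinarith [sq_nonneg δ]
      linarith
end

section
/- Let Ω = {0,1}^ℕ with the metric d(ω,ω') = 2^{−k} where k is the first index at which ω and ω' differ (and d = 0 if ω = ω'). Let N ∈ ℕ, let W be the set of finite binary words and W_N the set of binary words of length at most N, and let g : W → W_N. Let W̃ be the smallest set of finite words containing the empty word and closed under a ↦ a·g(a)·0 and a ↦ a·g(a)·1 (concatenation). Let Ω̃ ⊆ Ω be the set of sequences ω such that for every m ∈ ℕ there is a word w ∈ W̃ of length at least m that is a prefix of ω. Then dim_H Ω̃ ≥ (1/(N+1)) · dim_H Ω. In particular Ω̃ has positive Hausdorff dimension. -/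
open PiNat ENNReal

attribute [local instance] PiNat.metricSpace

namespace Stmt11Aux

variable (g : List Bool → List Bool)

/-- The sequence of words `a_k`. -/
def A (ω : ℕ → Bool) : ℕ → List Bool
  | 0 => []
  | k + 1 => A ω k ++ g (A ω k) ++ [ω k]

/-- The limit sequence. -/
def F (ω : ℕ → Bool) (n : ℕ) : Bool := (A g ω (n + 1)).getD n false

theorem length_A_lower (ω : ℕ → Bool) : ∀ k, k ≤ (A g ω k).length
  | 0 => Nat.zero_le _
  | k + 1 => by
    have := length_A_lower ω k
    simp only [A, List.length_append, List.length_singleton]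
    omega

theorem length_A_upper {N : ℕ} (hg : ∀ w, (g w).length ≤ N) (ω : ℕ → Bool) :
    ∀ k, (A g ω k).length ≤ k * (N + 1)
  | 0 => by simp [A]
  | k + 1 => by
    have := length_A_upper hg ω k
    have := hg (A g ω k)
    simp only [A, List.length_append, List.length_singleton]
    nlinarith

theorem A_prefix (ω : ℕ → Bool) {j k : ℕ} (h : j ≤ k) : A g ω j <+: A g ω k := by
  induction k with
  | zero => simpa using (Nat.le_zero.1 h) ▸ List.prefix_refl _
  | succ k ih =>
    rcases Nat.lt_or_ge j (k+1) with h' | h'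
    · exact (ih (Nat.lt_succ_iff.1 h')).trans
        (((List.prefix_append _ _).trans (List.prefix_append _ _)) : A g ω k <+: A g ω (k+1))
    · have : j = k + 1 := le_antisymm h h'
      simp [this]

theorem A_eq_of_agree (ω ω' : ℕ → Bool) {k : ℕ} (h : ∀ i < k, ω i = ω' i) :
    A g ω k = A g ω' k := by
  induction k with
  | zero => rfl
  | succ k ih =>
    have h1 : A g ω k = A g ω' k := ih fun i hi => h i (hi.trans (Nat.lt_succ_self k))
    simp [A, h1, h k (Nat.lt_succ_self k)]

theorem F_eq (ω : ℕ → Bool) {k i : ℕ} (hk : i < (A g ω k).length) :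
    F g ω i = (A g ω k).getD i false := by
  rcases le_total (i + 1) k with h | h
  · have hp := A_prefix g ω h
    have hi : i < (A g ω (i+1)).length := lt_of_lt_of_le (Nat.lt_succ_self i) (length_A_lower g ω _)
    rw [F, List.getD_eq_getElem _ _ hi, List.getD_eq_getElem _ _ hk]
    exact hp.getElem hi
  · have hp := A_prefix g ω h
    have hi : i < (A g ω (i+1)).length := lt_of_lt_of_le (Nat.lt_succ_self i) (length_A_lower g ω _)
    rw [F, List.getD_eq_getElem _ _ hi, List.getD_eq_getElem _ _ hk]
    exact (hp.getElem hk).symm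

end Stmt11Aux

namespace Stmt11Aux

variable (g : List Bool → List Bool)

theorem F_differs (ω ω' : ℕ → Bool) {k : ℕ} (hagree : ∀ i < k, ω i = ω' i)
    (hne : ω k ≠ ω' k) :
    F g ω ((A g ω k).length + (g (A g ω k)).length)
      ≠ F g ω' ((A g ω k).length + (g (A g ω k)).length) := by
  set p := (A g ω k).length + (g (A g ω k)).length with hp
  have hA : A g ω k = A g ω' k := A_eq_of_agree g ω ω' hagree
  have hlen : (A g ω (k+1)).length = p + 1 := by
    simp [A, hp]; omega
  have hlen' : (A g ω' (k+1)).length = p + 1 := by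
    simp [A, ← hA, hp]; omega
  have h1 : F g ω p = ω k := by
    rw [F_eq g ω (k := k+1) (by omega)]
    show (A g ω k ++ g (A g ω k) ++ [ω k]).getD p false = ω k
    rw [List.getD_append_right _ _ _ _ (by simp [hp])]
    simp [hp]
  have h2 : F g ω' p = ω' k := by
    rw [F_eq g ω' (k := k+1) (by omega)]
    show (A g ω' k ++ g (A g ω' k) ++ [ω' k]).getD p false = ω' k
    rw [List.getD_append_right _ _ _ _ (by simp [hp, ← hA])]
    simp [hp, ← hA]
  rw [h1, h2]; exact hne

theorem F_injective : Function.Injective (F g) := by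
  intro ω ω' h
  by_contra hne
  have hd : ∃ k, ω k ≠ ω' k := by
    by_contra hc
    push_neg at hc
    exact hne (funext hc)
  classical
  let k := Nat.find hd
  have hk : ω k ≠ ω' k := Nat.find_spec hd
  have hagree : ∀ i < k, ω i = ω' i := fun i hi => by
    by_contra hc
    exact absurd (Nat.find_le hc) (not_le.2 hi)
  exact F_differs g ω ω' hagree hk (by rw [h])

end Stmt11Aux

namespace Stmt11Aux

/-- The binary-expansion evaluation map. -/
noncomputable def hmap (ω : ℕ → Bool) : ℝ := ∑' i, (cond (ω i) 1 0 : ℝ) * (1 / 2) ^ (i + 1)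

theorem term_nonneg (ω : ℕ → Bool) (i : ℕ) : 0 ≤ (cond (ω i) 1 0 : ℝ) * (1 / 2) ^ (i + 1) := by
  cases ω i <;> norm_num

theorem term_le (ω : ℕ → Bool) (i : ℕ) :
    (cond (ω i) 1 0 : ℝ) * (1 / 2) ^ (i + 1) ≤ (1 / 2 : ℝ) ^ (i + 1) := by
  cases ω i <;> norm_num

theorem summable_geom_shift (k : ℕ) : Summable fun i : ℕ => ((1:ℝ) / 2) ^ (i + k) := by
  have h := summable_geometric_of_lt_one (by norm_num : (0:ℝ) ≤ 1/2) (by norm_num)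
  have := h.mul_right (((1:ℝ)/2) ^ k)
  refine this.congr fun i => ?_
  rw [pow_add]

theorem tsum_geom_shift (k : ℕ) : ∑' i : ℕ, ((1:ℝ) / 2) ^ (i + k + 1) = ((1:ℝ)/2) ^ k := by
  have h1 : ∀ i : ℕ, ((1:ℝ)/2) ^ (i + k + 1) = ((1:ℝ)/2) ^ i * ((1:ℝ)/2) ^ (k+1) := fun i => by
    rw [← pow_add, add_assoc]
  rw [tsum_congr h1, tsum_mul_right, tsum_geometric_two]
  rw [pow_succ]
  ring

theorem summable_hmap (ω : ℕ → Bool) :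
    Summable fun i : ℕ => (cond (ω i) 1 0 : ℝ) * (1 / 2) ^ (i + 1) := by
  refine Summable.of_nonneg_of_le (term_nonneg ω) (term_le ω) ?_
  have := summable_geom_shift 1
  exact this.congr fun i => rfl

theorem tail_nonneg (ω : ℕ → Bool) (k : ℕ) :
    0 ≤ ∑' i : ℕ, (cond (ω (i + k)) 1 0 : ℝ) * (1 / 2) ^ (i + k + 1) :=
  tsum_nonneg fun i => term_nonneg ω _

theorem tail_le (ω : ℕ → Bool) (k : ℕ) :
    ∑' i : ℕ, (cond (ω (i + k)) 1 0 : ℝ) * (1 / 2) ^ (i + k + 1) ≤ ((1:ℝ)/2) ^ k := by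
  have hs : Summable fun i : ℕ => (cond (ω (i + k)) 1 0 : ℝ) * (1 / 2) ^ (i + k + 1) :=
    (summable_hmap ω).comp_injective (add_left_injective k) |>.congr fun i => by simp
  calc ∑' i : ℕ, (cond (ω (i + k)) 1 0 : ℝ) * (1 / 2) ^ (i + k + 1)
      ≤ ∑' i : ℕ, ((1:ℝ)/2) ^ (i + k + 1) := by
        refine Summable.tsum_le_tsum (fun i => term_le ω _) hs ?_
        exact (summable_geom_shift (k+1)).congr fun i => by rw [add_assoc]
    _ = ((1:ℝ)/2) ^ k := tsum_geom_shift k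

theorem hmap_split (ω : ℕ → Bool) (k : ℕ) :
    hmap ω = (∑ i ∈ Finset.range k, (cond (ω i) 1 0 : ℝ) * (1 / 2) ^ (i + 1))
      + ∑' i : ℕ, (cond (ω (i + k)) 1 0 : ℝ) * (1 / 2) ^ (i + k + 1) := by
  rw [hmap, ← Summable.sum_add_tsum_nat_add k (summable_hmap ω)]

theorem hmap_lipschitz : LipschitzWith 1 hmap := by
  refine LipschitzWith.of_dist_le_mul fun ω ω' => ?_
  rcases eq_or_ne ω ω' with rfl | hne
  · simp
  rw [NNReal.coe_one, one_mul, PiNat.dist_eq_of_ne hne]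
  set k := firstDiff ω ω' with hk
  have hagree : ∀ i < k, ω i = ω' i := fun i hi => apply_eq_of_lt_firstDiff hi
  have h1 := hmap_split ω k
  have h2 := hmap_split ω' k
  have hsum : (∑ i ∈ Finset.range k, (cond (ω i) 1 0 : ℝ) * (1 / 2) ^ (i + 1))
      = ∑ i ∈ Finset.range k, (cond (ω' i) 1 0 : ℝ) * (1 / 2) ^ (i + 1) := by
    refine Finset.sum_congr rfl fun i hi => ?_
    rw [hagree i (Finset.mem_range.1 hi)]
  rw [Real.dist_eq, abs_sub_le_iff]
  constructor
  · have := tail_le ω k; have := tail_nonneg ω' k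
    rw [h1, h2, hsum]; linarith
  · have := tail_le ω' k; have := tail_nonneg ω k
    rw [h1, h2, hsum]; linarith

end Stmt11Aux

namespace Stmt11Aux

/-- Remainders of the binary expansion of `x`. -/
noncomputable def R (x : ℝ) : ℕ → ℝ
  | 0 => x
  | n + 1 => 2 * R x n - (if 1/2 ≤ R x n then 1 else 0)

/-- Binary digits of `x`. -/
noncomputable def dig (x : ℝ) (n : ℕ) : Bool := decide ((1:ℝ)/2 ≤ R x n)

theorem R_mem (x : ℝ) (hx0 : 0 ≤ x) (hx1 : x ≤ 1) : ∀ n, 0 ≤ R x n ∧ R x n ≤ 1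
  | 0 => ⟨hx0, hx1⟩
  | n + 1 => by
    obtain ⟨h0, h1⟩ := R_mem x hx0 hx1 n
    simp only [R]
    split_ifs with h
    · constructor <;> linarith
    · have := not_le.1 h; constructor <;> linarith

theorem R_invariant (x : ℝ) :
    ∀ n, x = (∑ i ∈ Finset.range n, (cond (dig x i) 1 0 : ℝ) * (1 / 2) ^ (i + 1))
      + R x n * (1 / 2) ^ n
  | 0 => by simp [R]
  | n + 1 => by
    have ih := R_invariant x n
    have key : (∑ i ∈ Finset.range (n+1), (cond (dig x i) 1 0 : ℝ) * (1/2)^(i+1))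
          + R x (n+1) * (1/2)^(n+1)
        = (∑ i ∈ Finset.range n, (cond (dig x i) 1 0 : ℝ) * (1/2)^(i+1)) + R x n * (1/2)^n := by
      rw [Finset.sum_range_succ]
      simp only [R, dig]
      split_ifs with h
      · rw [show (decide ((1:ℝ)/2 ≤ R x n)) = true from decide_eq_true h]
        simp only [cond, pow_succ]; ring
      · rw [show (decide ((1:ℝ)/2 ≤ R x n)) = false from decide_eq_false h]
        simp only [cond, pow_succ]; ring
    rw [key]; exact ih

theorem hmap_dig (x : ℝ) (hx0 : 0 ≤ x) (hx1 : x ≤ 1) : hmap (dig x) = x := by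
  have key : ∀ n : ℕ, |x - hmap (dig x)| ≤ (1/2:ℝ)^n := by
    intro n
    have h1 := hmap_split (dig x) n
    have h2 := R_invariant x n
    have ht0 := tail_nonneg (dig x) n
    have ht1 := tail_le (dig x) n
    obtain ⟨hr0, hr1⟩ := R_mem x hx0 hx1 n
    have hp : (0:ℝ) ≤ (1/2)^n := by positivity
    rw [abs_sub_le_iff]
    constructor <;> nlinarith
  by_contra hne
  have hpos : 0 < |x - hmap (dig x)| := abs_pos.2 (sub_ne_zero.2 fun h => hne h.symm)
  obtain ⟨n, hn⟩ := exists_pow_lt_of_lt_one hpos (by norm_num : (1:ℝ)/2 < 1)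
  exact absurd (key n) (not_le.2 hn)

theorem Icc_subset_range : Set.Icc (0:ℝ) 1 ⊆ hmap '' Set.univ := fun x hx =>
  ⟨dig x, Set.mem_univ _, hmap_dig x hx.1 hx.2⟩

end Stmt11Aux

open Stmt11Aux

/-- With the metric `d(ω,ω') = 2^{−k}` (`k` the first disagreement index) on
`Ω = {0,1}^ℕ`, if `g : W → W_N` assigns to each finite word a word of length at most `N`, and
`W̃` is the smallest set of words containing the empty word and closed under
`a ↦ a·g(a)·0` and `a ↦ a·g(a)·1`, then the set `Ω̃` of sequences having arbitrarily long
prefixes in `W̃` satisfies `dim_H Ω̃ ≥ dim_H Ω / (N+1)`; in particular `dim_H Ω̃ > 0`. -/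
theorem stmt11 (N : ℕ) (g : List Bool → List Bool) (hg : ∀ w, (g w).length ≤ N)
    (Wt : Set (List Bool))
    (hnil : ([] : List Bool) ∈ Wt)
    (hclosed : ∀ a ∈ Wt, a ++ g a ++ [false] ∈ Wt ∧ a ++ g a ++ [true] ∈ Wt)
    (hmin : ∀ S : Set (List Bool), ([] : List Bool) ∈ S →
      (∀ a ∈ S, a ++ g a ++ [false] ∈ S ∧ a ++ g a ++ [true] ∈ S) → Wt ⊆ S)
    (Ot : Set (ℕ → Bool))
    (hOt : Ot = {ω | ∀ m : ℕ, ∃ w ∈ Wt, m ≤ w.length ∧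
      ∀ i : ℕ, i < w.length → w.getD i false = ω i}) :
    dimH (Set.univ : Set (ℕ → Bool)) / ((N : ℝ≥0∞) + 1) ≤ dimH Ot ∧ 0 < dimH Ot := by
  classical
  haveI : SecondCountableTopology (ℕ → Bool) :=
    inferInstanceAs (@SecondCountableTopology (ℕ → Bool) Pi.topologicalSpace)
  -- `A g ω k ∈ Wt`
  have hAmem : ∀ (ω : ℕ → Bool) (k : ℕ), A g ω k ∈ Wt := by
    intro ω k
    induction k with
    | zero => exact hnil
    | succ k ih =>
      show A g ω k ++ g (A g ω k) ++ [ω k] ∈ Wt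
      cases hω : ω k
      · exact (hclosed _ ih).1
      · exact (hclosed _ ih).2
  -- the image of `F g` is contained in `Ot`
  set s : Set (ℕ → Bool) := F g '' Set.univ with hs
  have hsub : s ⊆ Ot := by
    rintro x ⟨ω, -, rfl⟩
    rw [hOt]
    intro m
    refine ⟨A g ω m, hAmem ω m, length_A_lower g ω m, fun i hi => ?_⟩
    exact (F_eq g ω hi).symm
  -- the inverse map is Hölder with exponent `(N+1)⁻¹`
  set r : NNReal := ((N : NNReal) + 1)⁻¹ with hr
  have hrpos : 0 < r := by positivity
  have hrcoe : (r : ℝ) = ((N : ℝ) + 1)⁻¹ := by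
    rw [hr]; push_cast; rfl
  have hrnn : (0:ℝ) ≤ (r : ℝ) := r.coe_nonneg
  set G : (ℕ → Bool) → (ℕ → Bool) := Function.invFun (F g) with hG
  have hGF : ∀ ω, G (F g ω) = ω := fun ω =>
    Function.leftInverse_invFun (F_injective g) ω
  have hHolder : HolderOnWith 2 r G s := by
    intro x hx y hy
    obtain ⟨ω, -, rfl⟩ := hx
    obtain ⟨ω', -, rfl⟩ := hy
    rw [hGF, hGF]
    rcases eq_or_ne ω ω' with rfl | hne
    · simp
    have hFne : F g ω ≠ F g ω' := fun h => hne (F_injective g h)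
    set k := firstDiff ω ω' with hk
    set fd := firstDiff (F g ω) (F g ω') with hfd
    -- the images differ at position `p`
    have hagree : ∀ i < k, ω i = ω' i := fun i hi => apply_eq_of_lt_firstDiff hi
    have hωk : ω k ≠ ω' k := apply_firstDiff_ne hne
    have hdiff := F_differs g ω ω' hagree hωk
    have hfdle : fd ≤ (A g ω k).length + (g (A g ω k)).length := by
      by_contra hc
      exact hdiff (apply_eq_of_lt_firstDiff (not_le.1 hc))
    have hfdlt : fd < (k + 1) * (N + 1) := by
      have h1 := length_A_upper g hg ω k
      have h2 := hg (A g ω k)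
      have : (k+1) * (N+1) = k * (N+1) + N + 1 := by ring
      omega
    -- distances
    have hd1 : dist ω ω' = (1/2 : ℝ) ^ k := PiNat.dist_eq_of_ne hne
    have hd2 : dist (F g ω) (F g ω') = (1/2 : ℝ) ^ fd := PiNat.dist_eq_of_ne hFne
    -- the real inequality
    have hreal : dist ω ω' ≤ 2 * dist (F g ω) (F g ω') ^ (r : ℝ) := by
      rw [hd1, hd2]
      have hb1 : ((1/2:ℝ)) ^ ((k+1)*(N+1)) ≤ (1/2:ℝ) ^ fd :=
        pow_le_pow_of_le_one (by norm_num) (by norm_num) hfdlt.le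
      have hb2 : ((1/2:ℝ) ^ ((k+1)*(N+1))) ^ (r:ℝ) ≤ ((1/2:ℝ) ^ fd) ^ (r:ℝ) :=
        Real.rpow_le_rpow (by positivity) hb1 hrnn
      have hb3 : ((1/2:ℝ) ^ ((k+1)*(N+1))) ^ (r:ℝ) = (1/2:ℝ) ^ (k+1) := by
        rw [← Real.rpow_natCast (1/2 : ℝ) ((k+1)*(N+1)), ← Real.rpow_mul (by norm_num),
          hrcoe]
        have : (((k+1)*(N+1) : ℕ) : ℝ) * ((N:ℝ)+1)⁻¹ = ((k+1 : ℕ) : ℝ) := by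
          push_cast
          field_simp
        rw [this, Real.rpow_natCast]
      have : (1/2:ℝ) ^ (k+1) ≤ ((1/2:ℝ) ^ fd) ^ (r:ℝ) := hb3 ▸ hb2
      calc (1/2:ℝ) ^ k = 2 * (1/2:ℝ) ^ (k+1) := by rw [pow_succ]; ring
        _ ≤ 2 * ((1/2:ℝ) ^ fd) ^ (r:ℝ) := by linarith
    -- convert to `edist`
    rw [edist_dist, edist_dist]
    calc ENNReal.ofReal (dist ω ω')
        ≤ ENNReal.ofReal (2 * dist (F g ω) (F g ω') ^ (r : ℝ)) :=
          ENNReal.ofReal_le_ofReal hreal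
      _ = 2 * ENNReal.ofReal (dist (F g ω) (F g ω')) ^ (r : ℝ) := by
          rw [ENNReal.ofReal_mul (by norm_num),
            ENNReal.ofReal_rpow_of_nonneg dist_nonneg hrnn]
          norm_num
      _ = ((2 : NNReal) : ℝ≥0∞) * ENNReal.ofReal (dist (F g ω) (F g ω')) ^ (r : ℝ) := by
          norm_num
  -- Hölder estimate on dimensions
  have himg : G '' s = Set.univ := by
    rw [hs, Set.image_image]
    simp only [hGF, Set.image_id']
  have hdim1 : dimH (Set.univ : Set (ℕ → Bool)) ≤ dimH s / r := by
    have := hHolder.dimH_image_le hrpos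
    rwa [himg] at this
  have hcast : (r : ℝ≥0∞) = ((N : ℝ≥0∞) + 1)⁻¹ := by
    rw [hr]
    push_cast
    rw [ENNReal.coe_inv (by positivity)]
    push_cast
    rfl
  have hdim2 : dimH (Set.univ : Set (ℕ → Bool)) ≤ dimH s * ((N : ℝ≥0∞) + 1) := by
    rw [div_eq_mul_inv, hcast, inv_inv] at hdim1
    exact hdim1
  have hmain : dimH (Set.univ : Set (ℕ → Bool)) / ((N : ℝ≥0∞) + 1) ≤ dimH Ot := by
    refine ENNReal.div_le_of_le_mul ?_
    exact hdim2.trans (mul_le_mul_left (dimH_mono hsub) _)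
  refine ⟨hmain, ?_⟩
  -- `dimH univ ≥ 1`
  have hone : (1 : ℝ≥0∞) ≤ dimH (Set.univ : Set (ℕ → Bool)) := by
    have hlip := hmap_lipschitz.dimH_image_le Set.univ
    have hIcc : dimH (Set.Icc (0:ℝ) 1) ≤ dimH (hmap '' Set.univ) := dimH_mono Icc_subset_range
    have hIccd : dimH (Set.Icc (0:ℝ) 1) = 1 := by
      rw [Real.dimH_of_mem_nhds (x := (1/2 : ℝ)) (Icc_mem_nhds (by norm_num) (by norm_num))]
      simp
    calc (1:ℝ≥0∞) = dimH (Set.Icc (0:ℝ) 1) := hIccd.symm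
      _ ≤ dimH (hmap '' Set.univ) := hIcc
      _ ≤ dimH (Set.univ : Set (ℕ → Bool)) := hlip
  have hpos : 0 < dimH (Set.univ : Set (ℕ → Bool)) / ((N : ℝ≥0∞) + 1) :=
    ENNReal.div_pos (by intro h; rw [h] at hone; simp at hone)
      (by finiteness)
  exact hpos.trans_le hmain
end

section
/- Let V : ℤ → ℝ be defined by V(n) = n + W(n) with W : ℤ → ℝ bounded, let E ∈ ℝ, and let K = { (v₁,v₂) ∈ ℝ² : |v₁| > |v₂| }. Then for all n large enough (depending only on E and sup|W|), the transfer matrix Π_n = [[E − V(n), −1],[1, 0]] maps K into K, and moreover ‖Π_n v‖₁ ≥ ½(n − E − sup|W|)‖v‖₁ for every v ∈ K, where ‖·‖₁ denotes the ℓ¹ norm on ℝ². -/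
/-- For `V(n) = n + W(n)` with `|W| ≤ M`, energy `E`, and the cone
`K = {(v₁,v₂) : |v₁| > |v₂|}`, for all sufficiently large `n` the transfer matrix
`Π_n = [[E − V(n), −1],[1,0]]` maps `K` into `K` and expands the `ℓ¹` norm:
`‖Π_n v‖₁ ≥ ½(n − E − M)‖v‖₁` for `v ∈ K`. Here `Π_n (v₁,v₂) = ((E−V(n))v₁ − v₂, v₁)`. -/
theorem stmt14 (W : ℤ → ℝ) (M : ℝ) (hW : ∀ n, |W n| ≤ M) (E : ℝ) :
    ∃ N : ℤ, ∀ n : ℤ, N ≤ n → ∀ v₁ v₂ : ℝ, |v₂| < |v₁| →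
      |v₁| < |(E - ((n : ℝ) + W n)) * v₁ - v₂| ∧
      (1 / 2) * ((n : ℝ) - E - M) * (|v₁| + |v₂|) ≤
        |(E - ((n : ℝ) + W n)) * v₁ - v₂| + |v₁| := by
  refine ⟨⌈E + M + 2⌉, fun n hn v₁ v₂ hv => ?_⟩
  have hn' : E + M + 2 ≤ (n : ℝ) := le_trans (Int.le_ceil _) (by exact_mod_cast hn)
  have hWn := hW n
  have hWl := abs_le.1 hWn
  set a : ℝ := (n : ℝ) + W n - E with ha
  have ha2 : 2 ≤ a := by simp only [ha]; linarith [hWl.1]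
  have hkey : a * |v₁| - |v₂| ≤ |(E - ((n : ℝ) + W n)) * v₁ - v₂| := by
    have h1 : |(E - ((n : ℝ) + W n)) * v₁ - v₂| = |a * v₁ + v₂| := by
      rw [show (E - ((n : ℝ) + W n)) * v₁ - v₂ = -(a * v₁ + v₂) by ring, abs_neg]
    rw [h1]
    have := abs_add_le (a * v₁ + v₂) (-v₂)
    simp only [abs_neg, add_neg_cancel_right] at this
    calc a * |v₁| - |v₂| = |a * v₁| - |v₂| := by
          rw [abs_mul, abs_of_nonneg (by linarith : (0:ℝ) ≤ a)]
      _ ≤ |a * v₁ + v₂| := by linarith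
  have hbound : (n : ℝ) - E - M ≤ a := by simp only [ha]; linarith [hWl.1]
  have hv1 : 0 ≤ |v₁| := abs_nonneg _
  have hv2 : 0 ≤ |v₂| := abs_nonneg _
  constructor
  · nlinarith
  · nlinarith
end

section
/- Let V_b : ℤ → ℝ be bounded and let H be the discrete Schrödinger operator on ℓ²(ℤ) with potential V(n) = n + V_b(n), i.e., (Hψ)(n) = ψ(n+1) + ψ(n−1) + (n + V_b(n))ψ(n). Then the essential spectrum of H is empty. -/
set_option maxHeartbeats 1000000

open Filter
open scoped ENNReal

/-- For `V(n) = n + V_b(n)` with `V_b` bounded, the discrete Schrödinger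
operator `(Hψ)(n) = ψ(n+1) + ψ(n−1) + (n + V_b(n))ψ(n)` on `ℓ²(ℤ)` has empty essential
spectrum: no energy `E` admits a singular Weyl sequence, i.e. an orthonormal sequence
`ψ_k` in `ℓ²(ℤ)` with `‖(H − E)ψ_k‖ → 0`. -/
theorem stmt15 (Vb : ℤ → ℝ) (hVb : ∃ M : ℝ, ∀ n, |Vb n| ≤ M) (E : ℝ) :
    ¬ ∃ ψ : ℕ → ℤ → ℝ,
      (∀ k, Summable (fun n : ℤ => (ψ k n) ^ 2)) ∧
      (∀ k, ∑' n : ℤ, (ψ k n) ^ 2 = 1) ∧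
      (∀ j k, j ≠ k → ∑' n : ℤ, ψ j n * ψ k n = 0) ∧
      (∀ k, Summable (fun n : ℤ =>
        (ψ k (n + 1) + ψ k (n - 1) + ((n : ℝ) + Vb n) * ψ k n - E * ψ k n) ^ 2)) ∧
      Filter.Tendsto (fun k => ∑' n : ℤ,
          (ψ k (n + 1) + ψ k (n - 1) + ((n : ℝ) + Vb n) * ψ k n - E * ψ k n) ^ 2)
        Filter.atTop (nhds 0) := by
  rintro ⟨ψ, hsq, hnorm, horth, hres, hlim⟩
  obtain ⟨M, hM⟩ := hVb
  have hM0 : 0 ≤ M := le_trans (abs_nonneg _) (hM 0)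
  classical
  have h2exp : ∀ x : ℝ, ‖x‖ ^ (2 : ℝ≥0∞).toReal = x ^ 2 := by
    intro x
    rw [ENNReal.toReal_ofNat, Real.rpow_two, Real.norm_eq_abs, sq_abs]
  have hmemiff : ∀ f : ℤ → ℝ, Summable (fun n => f n ^ 2) → Memℓp f (2 : ℝ≥0∞) := by
    intro f h
    exact memℓp_gen (by simpa only [h2exp] using h)
  have hsummem : ∀ f : ℤ → ℝ, Memℓp f (2 : ℝ≥0∞) → Summable (fun n => f n ^ 2) := by
    intro f h
    have := Memℓp.summable (by norm_num) h
    simpa only [h2exp] using this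
  have hcoeMk : ∀ (f : ℤ → ℝ) (hf : Memℓp f (2 : ℝ≥0∞)),
      (((⟨f, hf⟩ : lp (fun _ : ℤ => ℝ) 2)) : ∀ _ : ℤ, ℝ) = f := fun _ _ => rfl
  have hinner : ∀ f g : lp (fun _ : ℤ => ℝ) 2,
      (inner ℝ f g : ℝ) = ∑' n : ℤ, (f : ∀ _ : ℤ, ℝ) n * (g : ∀ _ : ℤ, ℝ) n := by
    intro f g
    rw [lp.inner_eq_tsum]
    simp [RCLike.inner_apply, mul_comm]
  have hnormsq : ∀ f : lp (fun _ : ℤ => ℝ) 2,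
      ‖f‖ ^ 2 = ∑' n : ℤ, (f : ∀ _ : ℤ, ℝ) n ^ 2 := by
    intro f
    rw [← real_inner_self_eq_norm_sq, hinner]
    exact tsum_congr fun n => (pow_two _).symm
  -- the Weyl sequence as elements of ℓ²
  set F : ℕ → lp (fun _ : ℤ => ℝ) 2 := fun k => ⟨ψ k, hmemiff _ (hsq k)⟩ with hF
  have hON : Orthonormal ℝ F := by
    rw [orthonormal_iff_ite]
    intro j k
    rw [hinner]
    by_cases h : j = k
    · subst h
      rw [if_pos rfl, ← hnorm j]
      exact tsum_congr fun n => (pow_two _).symm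
    · rw [if_neg h]
      exact horth j k h
  -- pointwise decay from Bessel
  have hdecay : ∀ n : ℤ, Tendsto (fun k => ψ k n ^ 2) atTop (nhds 0) := by
    intro n
    have hin : ∀ k, (inner ℝ (F k) (lp.single 2 n (1 : ℝ)) : ℝ) = ψ k n := by
      intro k
      rw [hinner]
      rw [tsum_eq_single n]
      · rw [lp.single_apply_self]
        show ψ k n * 1 = ψ k n
        ring
      · intro m hm
        rw [lp.single_apply_ne _ _ _ hm, mul_zero]
    have hsumm : Summable (fun k => ψ k n ^ 2) := by
      have := hON.inner_products_summable (lp.single 2 n (1 : ℝ))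
      simpa [hin, Real.norm_eq_abs, sq_abs] using this
    exact hsumm.tendsto_atTop_zero
  -- summability of shifted sequences
  have hsqP : ∀ k, Summable (fun n : ℤ => ψ k (n + 1) ^ 2) := by
    intro k
    have := ((Equiv.addRight (1 : ℤ)).summable_iff (f := fun n : ℤ => ψ k n ^ 2)).2 (hsq k)
    simpa [Function.comp_def] using this
  have hsqQ : ∀ k, Summable (fun n : ℤ => ψ k (n - 1) ^ 2) := by
    intro k
    have := ((Equiv.subRight (1 : ℤ)).summable_iff (f := fun n : ℤ => ψ k n ^ 2)).2 (hsq k)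
    simpa [Function.comp_def, Equiv.subRight_apply] using this
  have htP : ∀ k, ∑' n : ℤ, ψ k (n + 1) ^ 2 = 1 := by
    intro k
    have := (Equiv.addRight (1 : ℤ)).tsum_eq (fun n : ℤ => ψ k n ^ 2)
    simpa [hnorm k] using this
  have htQ : ∀ k, ∑' n : ℤ, ψ k (n - 1) ^ 2 = 1 := by
    intro k
    have := (Equiv.subRight (1 : ℤ)).tsum_eq (fun n : ℤ => ψ k n ^ 2)
    simpa [hnorm k] using this
  -- choice of the window
  set C : ℝ := M + |E| with hC
  set N : ℤ := ⌈C⌉ + 5 with hNdef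
  have hNC : C + 5 ≤ (N : ℝ) := by
    have := Int.le_ceil C
    rw [hNdef]
    push_cast
    linarith
  have hout : ∀ n : ℤ, n ∉ Finset.Icc (-N) N → (5 : ℝ) ≤ |(n : ℝ) + Vb n - E| := by
    intro n hn
    rw [Finset.mem_Icc, not_and_or, not_le, not_le] at hn
    have habs : (N : ℝ) ≤ |(n : ℝ)| := by
      rcases hn with h | h
      · have h1 : (n : ℝ) < -(N : ℝ) := by exact_mod_cast h
        have h2 := neg_abs_le (n : ℝ)
        linarith
      · have h1 : (N : ℝ) < (n : ℝ) := by exact_mod_cast h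
        have h2 := le_abs_self (n : ℝ)
        linarith
    have h3 := hM n
    have h4 : |(n : ℝ)| ≤ |(n : ℝ) + Vb n - E| + |E - Vb n| := by
      calc |(n : ℝ)| = |((n : ℝ) + Vb n - E) + (E - Vb n)| := by ring_nf
        _ ≤ |(n : ℝ) + Vb n - E| + |E - Vb n| := abs_add_le _ _
    have h6 : |E - Vb n| ≤ |E| + |Vb n| := abs_sub _ _
    have h7 := le_abs_self E
    linarith
  -- main quantitative estimate
  have main : ∀ k,
      (∑' n : ℤ, (ψ k (n + 1) + ψ k (n - 1) + ((n : ℝ) + Vb n) * ψ k n - E * ψ k n) ^ 2) ≤ 1 →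
      (1 : ℝ) / 2 ≤ ∑ n ∈ Finset.Icc (-N) N, ψ k n ^ 2 := by
    intro k hk
    -- the multiplication operator part as an ℓ² element
    have hWmem : Memℓp (fun n : ℤ => ((n : ℝ) + Vb n - E) * ψ k n) (2 : ℝ≥0∞) := by
      have heq : (fun n : ℤ => ((n : ℝ) + Vb n - E) * ψ k n)
          = (fun n : ℤ => ψ k (n + 1) + ψ k (n - 1) + ((n : ℝ) + Vb n) * ψ k n - E * ψ k n)
            - (fun n : ℤ => ψ k (n + 1)) - (fun n : ℤ => ψ k (n - 1)) := by
        funext n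
        simp only [Pi.sub_apply]
        ring
      rw [heq]
      exact ((hmemiff _ (hres k)).sub (hmemiff _ (hsqP k))).sub (hmemiff _ (hsqQ k))
    set W : lp (fun _ : ℤ => ℝ) 2 := ⟨_, hWmem⟩ with hW
    set R : lp (fun _ : ℤ => ℝ) 2 := ⟨_, hmemiff _ (hres k)⟩ with hR
    set P : lp (fun _ : ℤ => ℝ) 2 := ⟨_, hmemiff _ (hsqP k)⟩ with hP
    set Q : lp (fun _ : ℤ => ℝ) 2 := ⟨_, hmemiff _ (hsqQ k)⟩ with hQ
    have hWeq : W = R - P - Q := by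
      apply lp.ext
      funext n
      simp only [lp.coeFn_sub, Pi.sub_apply, hW, hR, hP, hQ, hcoeMk]
      ring
    have hnR : ‖R‖ ≤ 1 := by
      have h := hnormsq R
      rw [hR, hcoeMk] at h
      nlinarith [norm_nonneg R, hk, h]
    have hnP : ‖P‖ ≤ 1 := by
      have h := hnormsq P
      rw [hP, hcoeMk] at h
      rw [htP k] at h
      nlinarith [norm_nonneg P, h]
    have hnQ : ‖Q‖ ≤ 1 := by
      have h := hnormsq Q
      rw [hQ, hcoeMk] at h
      rw [htQ k] at h
      nlinarith [norm_nonneg Q, h]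
    have hnW : ‖W‖ ≤ 3 := by
      rw [hWeq]
      calc ‖R - P - Q‖ ≤ ‖R - P‖ + ‖Q‖ := norm_sub_le _ _
        _ ≤ ‖R‖ + ‖P‖ + ‖Q‖ := by linarith [norm_sub_le R P]
        _ ≤ 3 := by linarith
    have hW2 : ∑' n : ℤ, (((n : ℝ) + Vb n - E) * ψ k n) ^ 2 ≤ 9 := by
      have h := hnormsq W
      rw [hW, hcoeMk] at h
      have h9 : ‖W‖ ^ 2 ≤ 9 := by nlinarith [norm_nonneg W, hnW]
      rw [h] at h9
      exact h9
    have hWs : Summable (fun n : ℤ => (((n : ℝ) + Vb n - E) * ψ k n) ^ 2) := hsummem _ hWmem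
    have hsplit := Summable.sum_add_tsum_compl (s := Finset.Icc (-N) N) (hsq k)
    rw [hnorm k] at hsplit
    have htail : ∑' (n : ↑((↑(Finset.Icc (-N) N) : Set ℤ)ᶜ)), ψ k (↑n : ℤ) ^ 2 ≤ 9 / 25 := by
      have hle : ∀ (n : ↑((↑(Finset.Icc (-N) N) : Set ℤ)ᶜ)),
          ψ k (↑n : ℤ) ^ 2 ≤ (1 / 25) * ((((↑n : ℤ) : ℝ) + Vb ↑n - E) * ψ k ↑n) ^ 2 := by
        intro n
        have hn : (↑n : ℤ) ∉ Finset.Icc (-N) N := by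
          have := n.2
          simpa using this
        have h5 := hout _ hn
        have h25 : (25 : ℝ) ≤ (((↑n : ℤ) : ℝ) + Vb ↑n - E) ^ 2 := by
          nlinarith [sq_abs (((↑n : ℤ) : ℝ) + Vb ↑n - E)]
        nlinarith [sq_nonneg (ψ k ↑n), mul_nonneg (sub_nonneg.2 h25) (sq_nonneg (ψ k ↑n))]
      calc ∑' (n : ↑((↑(Finset.Icc (-N) N) : Set ℤ)ᶜ)), ψ k (↑n : ℤ) ^ 2
          ≤ ∑' (n : ↑((↑(Finset.Icc (-N) N) : Set ℤ)ᶜ)),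
              (1 / 25) * ((((↑n : ℤ) : ℝ) + Vb ↑n - E) * ψ k ↑n) ^ 2 :=
            Summable.tsum_le_tsum hle ((hsq k).subtype _) ((hWs.mul_left _).subtype _)
        _ = (1 / 25) * ∑' (n : ↑((↑(Finset.Icc (-N) N) : Set ℤ)ᶜ)),
              ((((↑n : ℤ) : ℝ) + Vb ↑n - E) * ψ k ↑n) ^ 2 := tsum_mul_left
        _ ≤ (1 / 25) * ∑' n : ℤ, (((n : ℝ) + Vb n - E) * ψ k n) ^ 2 := by
            have := Summable.tsum_subtype_le (fun n : ℤ => (((n : ℝ) + Vb n - E) * ψ k n) ^ 2)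
              ((↑(Finset.Icc (-N) N) : Set ℤ)ᶜ) (fun n => sq_nonneg _) hWs
            linarith
        _ ≤ 9 / 25 := by linarith
    linarith [hsplit, htail]
  -- conclusion
  have hev1 : ∀ᶠ k in atTop, (1 : ℝ) / 2 ≤ ∑ n ∈ Finset.Icc (-N) N, ψ k n ^ 2 := by
    have h1 := hlim.eventually (gt_mem_nhds one_pos)
    exact h1.mono fun k hk => main k hk.le
  have hev2 : Tendsto (fun k => ∑ n ∈ Finset.Icc (-N) N, ψ k n ^ 2) atTop (nhds 0) := by
    have := tendsto_finset_sum (Finset.Icc (-N) N) (fun n _ => hdecay n)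
    simpa using this
  have hev3 : ∀ᶠ k in atTop, (∑ n ∈ Finset.Icc (-N) N, ψ k n ^ 2) < 1 / 2 :=
    hev2.eventually (gt_mem_nhds (by norm_num))
  obtain ⟨k, h1, h2⟩ := (hev1.and hev3).exists
  linarith
end

section
/- Let H be a self-adjoint operator on ℓ²(ℤ) given by (Hψ)(n) = ψ(n+1) + ψ(n−1) + V(n)ψ(n) with V bounded, and let E_max = max σ(H). Let u⁺ be a nontrivial real solution of u(n+1) + u(n−1) + V(n)u(n) = E_max·u(n) which is subordinate at +∞, meaning lim_{N→∞} (Σ_{n=1}^N |u⁺(n)|²)/(Σ_{n=1}^N |ũ(n)|²) = 0 for every solution ũ linearly independent from u⁺. Then, after multiplying by a suitable nonzero constant, u⁺(n) > 0 for every n ∈ ℤ. -/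
set_option maxHeartbeats 1600000
set_option linter.unusedSectionVars false
open scoped RealInnerProductSpace

namespace Stmt16

noncomputable abbrev Esp : Type := lp (fun _ : ℤ => ℝ) 2

section partA


variable (V : ℤ → ℝ) (E0 : ℝ)

/-- `f` is a solution of the difference equation at energy `E0`. -/
def IsSol (f : ℤ → ℝ) : Prop := ∀ n : ℤ, f (n+1) + f (n-1) + V n * f n = E0 * f n

lemma isSol_sub {f g : ℤ → ℝ} (hf : IsSol V E0 f) (hg : IsSol V E0 g) :
    IsSol V E0 (f - g) := by
  intro n
  have h1 := hf n; have h2 := hg n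
  simp only [Pi.sub_apply]
  linarith

lemma eq_zero_of_consec {f : ℤ → ℝ} (hf : IsSol V E0 f) {k : ℤ}
    (h0 : f k = 0) (h1 : f (k+1) = 0) : ∀ n, f n = 0 := by
  have key : ∀ m : ℤ, f (k + m) = 0 ∧ f (k + m + 1) = 0 := by
    intro m
    induction m using Int.induction_on with
    | zero => exact ⟨by simpa using h0, by simpa using h1⟩
    | succ i ih =>
      refine ⟨by rw [show k + ((i:ℤ)+1) = k + i + 1 by ring]; exact ih.2, ?_⟩
      have hr := hf (k + i + 1)
      rw [show k + (i:ℤ) + 1 - 1 = k + i by ring, ih.1, ih.2] at hr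
      rw [show k + ((i:ℤ)+1) + 1 = k + i + 1 + 1 by ring]
      linarith
    | pred i ih =>
      refine ⟨?_, by rw [show k + (-(i:ℤ)-1) + 1 = k + -(i:ℤ) by ring]; exact ih.1⟩
      have hr := hf (k + -(i:ℤ))
      rw [show k + -(i:ℤ) - 1 = k + (-(i:ℤ) - 1) by ring, ih.1,
        show k + -(i:ℤ) + 1 = k + -(i:ℤ) + 1 from rfl] at hr
      rw [ih.2] at hr
      linarith
  intro n
  have := (key (n - k)).1
  rwa [show k + (n - k) = n by ring] at this

/-- Forward recursion pairs `(w (k+m), w (k+m+1))`. -/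
def fwdP (c : ℤ → ℝ) (k : ℤ) : ℕ → ℝ × ℝ
  | 0 => (0, 1)
  | m+1 => ((fwdP c k m).2, c (k + m + 1) * (fwdP c k m).2 - (fwdP c k m).1)

/-- Backward recursion pairs `(w (k-m), w (k-m+1))`. -/
def bwdP (c : ℤ → ℝ) (k : ℤ) : ℕ → ℝ × ℝ
  | 0 => (0, 1)
  | m+1 => (c (k - m) * (bwdP c k m).1 - (bwdP c k m).2, (bwdP c k m).1)

/-- The Dirichlet solution at `k`: vanishes at `k`, equals `1` at `k+1`. -/
noncomputable def wsol (c : ℤ → ℝ) (k : ℤ) (n : ℤ) : ℝ :=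
  if k ≤ n then (fwdP c k (n - k).toNat).1 else (bwdP c k (k - n).toNat).1

lemma wsol_fwd (c : ℤ → ℝ) (k : ℤ) (m : ℕ) :
    wsol c k (k + m) = (fwdP c k m).1 ∧ wsol c k (k + m + 1) = (fwdP c k m).2 := by
  constructor
  · rw [wsol, if_pos (by omega), show k + (m:ℤ) - k = (m:ℤ) by ring, Int.toNat_natCast]
  · have : wsol c k (k + m + 1) = (fwdP c k (m+1)).1 := by
      rw [wsol, if_pos (by omega), show k + (m:ℤ) + 1 - k = ((m+1:ℕ):ℤ) by push_cast; ring,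
        Int.toNat_natCast]
    rw [this, fwdP]

lemma wsol_bwd (c : ℤ → ℝ) (k : ℤ) (m : ℕ) :
    wsol c k (k - m) = (bwdP c k m).1 ∧ wsol c k (k - m + 1) = (bwdP c k m).2 := by
  constructor
  · rcases Nat.eq_zero_or_pos m with h | h
    · subst h; simp [wsol, bwdP, fwdP]
    · rw [wsol, if_neg (by omega), show k - (k - (m:ℤ)) = (m:ℤ) by ring, Int.toNat_natCast]
  · rcases Nat.eq_zero_or_pos m with h | h
    · subst h
      have := (wsol_fwd c k 1).1
      rw [show k + ((1:ℕ):ℤ) = k - (0:ℕ) + 1 by push_cast; ring] at this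
      rw [this]
      simp [fwdP, bwdP]
    · obtain ⟨m', rfl⟩ : ∃ m', m = m' + 1 := ⟨m - 1, by omega⟩
      have : wsol c k (k - ((m'+1:ℕ):ℤ) + 1) = (bwdP c k m').1 := by
        rw [show k - ((m'+1:ℕ):ℤ) + 1 = k - (m':ℕ) by push_cast; ring]
        exact (wsol_bwd c k m').1
      rw [this, bwdP]

lemma wsol_zero (c : ℤ → ℝ) (k : ℤ) : wsol c k k = 0 := by
  have := (wsol_fwd c k 0).1
  simpa [fwdP] using this

lemma wsol_one (c : ℤ → ℝ) (k : ℤ) : wsol c k (k+1) = 1 := by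
  have := (wsol_fwd c k 0).2
  simpa [fwdP] using this

lemma wsol_rec (c : ℤ → ℝ) (k : ℤ) (n : ℤ) :
    wsol c k (n+1) = c n * wsol c k n - wsol c k (n-1) := by
  rcases lt_trichotomy n k with h | h | h
  · -- n ≤ k - 1 : write n = k - m, m ≥ 1
    obtain ⟨m, hm, rfl⟩ : ∃ m : ℕ, 1 ≤ m ∧ n = k - m := ⟨(k - n).toNat, by omega, by omega⟩
    have h1 := (wsol_bwd c k m).1
    have h2 := (wsol_bwd c k m).2
    have h3 : wsol c k (k - (m:ℤ) - 1) = (bwdP c k (m+1)).1 := by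
      have := (wsol_bwd c k (m+1)).1
      rwa [show k - ((m+1:ℕ):ℤ) = k - (m:ℤ) - 1 by push_cast; ring] at this
    rw [h1, h2, h3, bwdP]
    ring
  · subst h
    have hb : wsol c n (n - 1) = -1 := by
      have := (wsol_bwd c n 1).1
      rw [show n - ((1:ℕ):ℤ) = n - 1 by push_cast; ring] at this
      simp [bwdP] at this
      linarith [this]
    rw [wsol_one, wsol_zero, hb]
    ring
  · -- n ≥ k + 1 : n = k + (m'+1)
    obtain ⟨m', rfl⟩ : ∃ m' : ℕ, n = k + (m':ℤ) + 1 := ⟨(n - k - 1).toNat, by omega⟩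
    have h1 := (wsol_fwd c k m').1
    have h2 := (wsol_fwd c k m').2
    have h3 : wsol c k (k + (m':ℤ) + 1 + 1) = (fwdP c k (m'+1)).2 := by
      have := (wsol_fwd c k (m'+1)).2
      rwa [show k + ((m'+1:ℕ):ℤ) + 1 = k + (m':ℤ) + 1 + 1 by push_cast; ring] at this
    rw [h3, fwdP, show k + (m':ℤ) + 1 - 1 = k + (m':ℤ) by ring, h1, h2]

/-- `wsol (E0 - V) k` is a solution. -/
lemma wsol_isSol (k : ℤ) : IsSol V E0 (wsol (fun n => E0 - V n) k) := by
  intro n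
  have := wsol_rec (fun n => E0 - V n) k n
  linarith

/-- Constancy of the Wronskian. -/
lemma wronskian_const {f g : ℤ → ℝ} (hf : IsSol V E0 f) (hg : IsSol V E0 g) (n : ℤ) :
    f (n+1) * g n - f n * g (n+1) = f 1 * g 0 - f 0 * g 1 := by
  have step : ∀ m : ℤ, f (m+1) * g m - f m * g (m+1) = f m * g (m-1) - f (m-1) * g m := by
    intro m
    have h1 := hf m; have h2 := hg m
    have e1 : f (m+1) = E0 * f m - V m * f m - f (m-1) := by linarith
    have e2 : g (m+1) = E0 * g m - V m * g m - g (m-1) := by linarith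
    rw [e1, e2]; ring
  induction n using Int.induction_on with
  | zero => rfl
  | succ i ih =>
    have := step ((i:ℤ)+1)
    rw [show (i:ℤ) + 1 - 1 = (i:ℤ) by ring] at this
    rw [this]; exact ih
  | pred i ih =>
    have := step (-(i:ℤ))
    rw [show -(i:ℤ) - 1 + 1 = -(i:ℤ) by ring, ← this]
    exact ih


end partA

section partC



lemma inner_coord (f g : Esp) : ⟪f, g⟫ = ∑' i, f i * g i := by
  rw [lp.inner_eq_tsum]; simp [RCLike.inner_apply]
  exact tsum_congr fun i => mul_comm _ _

lemma summable_mul (f g : Esp) : Summable (fun i => f i * g i) := by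
  have := lp.summable_inner (𝕜 := ℝ) f g
  simpa [RCLike.inner_apply, mul_comm] using this

lemma summable_abs_mul {p q : ℤ → ℝ} (hp : Summable fun i => p i * p i)
    (hq : Summable fun i => q i * q i) : Summable fun i => |p i * q i| := by
  refine Summable.of_nonneg_of_le (fun i => abs_nonneg _) (fun i => ?_)
    (((hp.add hq).div_const 2))
  have := sq_nonneg (|p i| - |q i|)
  have h1 : |p i * q i| = |p i| * |q i| := abs_mul _ _
  have h2 : p i * p i = |p i| * |p i| := (abs_mul_abs_self _).symm
  have h3 : q i * q i = |q i| * |q i| := (abs_mul_abs_self _).symm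
  rw [h1, h2, h3]
  nlinarith [abs_nonneg (p i), abs_nonneg (q i)]

lemma summable_mul' {p q : ℤ → ℝ} (hp : Summable fun i => p i * p i)
    (hq : Summable fun i => q i * q i) : Summable fun i => p i * q i :=
  (summable_abs_mul hp hq).of_abs

lemma summable_sq (f : Esp) : Summable (fun i => f i * f i) := summable_mul f f

lemma summable_sq_shift (f : Esp) (d : ℤ) : Summable (fun i => f (i + d) * f (i + d)) := by
  have h := (Equiv.addRight d).summable_iff.mpr (summable_sq f)
  exact h

variable (V : ℤ → ℝ) (H : Esp →L[ℝ] Esp)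
  (hH : ∀ ψ : Esp, ∀ n : ℤ, (H ψ : ∀ _ : ℤ, ℝ) n = ψ (n + 1) + ψ (n - 1) + V n * ψ n)

section symm
variable {M : ℝ} (hV : ∀ n, |V n| ≤ M)

include hH hV in
lemma H_symm : ∀ x y : Esp, ⟪H x, y⟫ = ⟪x, H y⟫ := by
  have hM : 0 ≤ M := le_trans (abs_nonneg _) (hV 0)
  intro x y
  -- summability facts
  have sxx := summable_sq x
  have syy := summable_sq y
  have sx1 : Summable fun i => x (i + 1) * x (i + 1) := summable_sq_shift x 1
  have sy1 : Summable fun i => y (i + 1) * y (i + 1) := summable_sq_shift y 1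
  have sxm : Summable fun i => x (i + -1) * x (i + -1) := summable_sq_shift x (-1)
  have sym' : Summable fun i => y (i + -1) * y (i + -1) := summable_sq_shift y (-1)
  have sxm' : Summable fun i => x (i - 1) * x (i - 1) := by
    simpa [sub_eq_add_neg] using sxm
  have sym'' : Summable fun i => y (i - 1) * y (i - 1) := by
    simpa [sub_eq_add_neg] using sym'
  have s1 : Summable fun i => x (i + 1) * y i := summable_mul' sx1 syy
  have s2 : Summable fun i => x (i - 1) * y i := summable_mul' sxm' syy
  have s1' : Summable fun i => x i * y (i + 1) := summable_mul' sxx sy1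
  have s2' : Summable fun i => x i * y (i - 1) := summable_mul' sxx sym''
  have s3 : Summable fun i => V i * x i * y i := by
    refine Summable.of_abs (Summable.of_nonneg_of_le (fun i => abs_nonneg _) (fun i => ?_)
      ((summable_abs_mul sxx syy).mul_left M))
    have : |V i * x i * y i| = |V i| * |x i * y i| := by
      rw [mul_assoc, abs_mul]
    rw [this]
    exact mul_le_mul_of_nonneg_right (hV i) (abs_nonneg _)
  -- coordinate expansion
  have lhs : ⟪H x, y⟫ = ∑' i, (x (i+1) + x (i-1) + V i * x i) * y i := by
    rw [inner_coord]
    exact tsum_congr fun i => by rw [hH x i]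
  have rhs : ⟪x, H y⟫ = ∑' i, x i * (y (i+1) + y (i-1) + V i * y i) := by
    rw [inner_coord]
    exact tsum_congr fun i => by rw [hH y i]
  -- shift identities
  have shift1 : (∑' i, x (i - 1) * y i) = ∑' i, x i * y (i + 1) := by
    have := Equiv.tsum_eq (Equiv.addRight (1:ℤ)) (fun i => x (i - 1) * y i)
    rw [← this]
    exact tsum_congr fun i => by simp [Equiv.coe_addRight]
  have shift2 : (∑' i, x i * y (i - 1)) = ∑' i, x (i + 1) * y i := by
    have := Equiv.tsum_eq (Equiv.addRight (1:ℤ)) (fun i => x i * y (i - 1))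
    rw [← this]
    exact tsum_congr fun i => by simp [Equiv.coe_addRight]
  rw [lhs, rhs]
  have expl : ∀ i : ℤ, (x (i+1) + x (i-1) + V i * x i) * y i
      = x (i+1) * y i + x (i-1) * y i + V i * x i * y i := fun i => by ring
  have expr : ∀ i : ℤ, x i * (y (i+1) + y (i-1) + V i * y i)
      = x i * y (i+1) + x i * y (i-1) + V i * x i * y i := fun i => by ring
  rw [tsum_congr expl, tsum_congr expr,
    Summable.tsum_add (s1.add s2) s3, Summable.tsum_add s1 s2,
    Summable.tsum_add (s1'.add s2') s3, Summable.tsum_add s1' s2',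
    shift1, shift2]
  ring

end symm

section bound
variable (hs : ∀ x y : Esp, ⟪H x, y⟫ = ⟪x, H y⟫)

include hs in
/-- Cauchy–Schwarz for the PSD form `B z w = μ⟪z,w⟫ - ⟪z,Hw⟫`. -/
lemma form_cs (μ : ℝ) (hpos : ∀ z : Esp, 0 ≤ μ * ‖z‖^2 - ⟪z, H z⟫) (x y : Esp) :
    (μ * ⟪x, y⟫ - ⟪x, H y⟫)^2
      ≤ (μ * ‖x‖^2 - ⟪x, H x⟫) * (μ * ‖y‖^2 - ⟪y, H y⟫) := by
  set B : Esp → Esp → ℝ := fun z w => μ * ⟪z, w⟫ - ⟪z, H w⟫ with hB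
  have hBx : ∀ z, B z z = μ * ‖z‖^2 - ⟪z, H z⟫ := by
    intro z
    show μ * ⟪z, z⟫ - ⟪z, H z⟫ = _
    rw [real_inner_self_eq_norm_sq]
  have expand : ∀ t : ℝ, B y y * (t * t) + (2 * B x y) * t + B x x
      = B (x + t • y) (x + t • y) := by
    intro t
    simp only [hB, inner_add_left, inner_add_right, real_inner_smul_left,
      real_inner_smul_right, map_add, map_smul]
    have hc : ⟪y, H x⟫ = ⟪x, H y⟫ := by
      rw [← hs x y, real_inner_comm]
    rw [hc, real_inner_comm y x]
    ring
  have hquad : ∀ t : ℝ, 0 ≤ B y y * (t * t) + (2 * B x y) * t + B x x := by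
    intro t
    rw [expand t]
    have := hpos (x + t • y)
    rw [← hBx] at this
    exact this
  have hd := discrim_le_zero hquad
  rw [discrim] at hd
  have h1 : B x y ^ 2 ≤ B x x * B y y := by nlinarith [hd]
  calc (μ * ⟪x, y⟫ - ⟪x, H y⟫)^2 = B x y ^2 := rfl
    _ ≤ B x x * B y y := h1
    _ = _ := by rw [hBx, hBx]

include hH hs in
lemma quad_bound (Emax : ℝ) (hEmax : Emax = sSup (spectrum ℝ H)) :
    ∀ ψ : Esp, ⟪ψ, H ψ⟫ ≤ Emax * ‖ψ‖^2 := by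
  haveI : Nontrivial Esp := by
    refine ⟨0, lp.single 2 0 1, fun h => ?_⟩
    have := congrFun (congrArg (fun f : Esp => (f : ℤ → ℝ)) h) 0
    simp [lp.single_apply_self] at this
  by_contra hcon
  push_neg at hcon
  obtain ⟨ψ₀, hψ₀⟩ := hcon
  have hψ₀ne : ψ₀ ≠ 0 := by
    rintro rfl
    simp at hψ₀
  set S : Set ℝ := {r : ℝ | ∃ ψ : Esp, ‖ψ‖ = 1 ∧ r = ⟪ψ, H ψ⟫} with hS
  have hSne : S.Nonempty := by
    refine ⟨⟪‖ψ₀‖⁻¹ • ψ₀, H (‖ψ₀‖⁻¹ • ψ₀)⟫, ‖ψ₀‖⁻¹ • ψ₀, ?_, rfl⟩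
    exact norm_smul_inv_norm hψ₀ne
  have hSbdd : BddAbove S := by
    refine ⟨‖H‖, fun r hr => ?_⟩
    obtain ⟨ψ, hψ, rfl⟩ := hr
    calc ⟪ψ, H ψ⟫ ≤ ‖ψ‖ * ‖H ψ‖ := real_inner_le_norm _ _
      _ ≤ ‖ψ‖ * (‖H‖ * ‖ψ‖) := by
          exact mul_le_mul_of_nonneg_left (H.le_opNorm ψ) (norm_nonneg _)
      _ = ‖H‖ := by rw [hψ]; ring
  set m : ℝ := sSup S with hm
  -- `m` dominates the quadratic form
  have hmq : ∀ z : Esp, ⟪z, H z⟫ ≤ m * ‖z‖^2 := by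
    intro z
    rcases eq_or_ne z 0 with rfl | hz
    · simp
    · have hn : ‖z‖ ≠ 0 := norm_ne_zero_iff.mpr hz
      have h1 : ⟪‖z‖⁻¹ • z, H (‖z‖⁻¹ • z)⟫ ≤ m :=
        le_csSup hSbdd ⟨‖z‖⁻¹ • z, norm_smul_inv_norm hz, rfl⟩
      have h2 : ⟪‖z‖⁻¹ • z, H (‖z‖⁻¹ • z)⟫ = ‖z‖⁻¹ * (‖z‖⁻¹ * ⟪z, H z⟫) := by
        rw [map_smul, real_inner_smul_left, real_inner_smul_right]
      rw [h2] at h1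
      have hn2 : (0:ℝ) < ‖z‖ := norm_pos_iff.mpr hz
      calc ⟪z, H z⟫ = ‖z‖^2 * (‖z‖⁻¹ * (‖z‖⁻¹ * ⟪z, H z⟫)) := by
            field_simp
          _ ≤ ‖z‖^2 * m := by
            exact mul_le_mul_of_nonneg_left h1 (by positivity)
          _ = m * ‖z‖^2 := by ring
  -- Emax < m
  have hEm : Emax < m := by
    have h1 : ⟪‖ψ₀‖⁻¹ • ψ₀, H (‖ψ₀‖⁻¹ • ψ₀)⟫ = ‖ψ₀‖⁻¹ * (‖ψ₀‖⁻¹ * ⟪ψ₀, H ψ₀⟫) := by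
      rw [map_smul, real_inner_smul_left, real_inner_smul_right]
    have h2 : ⟪‖ψ₀‖⁻¹ • ψ₀, H (‖ψ₀‖⁻¹ • ψ₀)⟫ ≤ m :=
      le_csSup hSbdd ⟨‖ψ₀‖⁻¹ • ψ₀, norm_smul_inv_norm hψ₀ne, rfl⟩
    have hn2 : (0:ℝ) < ‖ψ₀‖ := norm_pos_iff.mpr hψ₀ne
    rw [h1] at h2
    have : Emax * ‖ψ₀‖^2 < ‖ψ₀‖^2 * (‖ψ₀‖⁻¹ * (‖ψ₀‖⁻¹ * ⟪ψ₀, H ψ₀⟫)) := by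
      have : ‖ψ₀‖^2 * (‖ψ₀‖⁻¹ * (‖ψ₀‖⁻¹ * ⟪ψ₀, H ψ₀⟫)) = ⟪ψ₀, H ψ₀⟫ := by
        field_simp
      rw [this]
      exact hψ₀
    nlinarith [sq_nonneg ‖ψ₀‖, hn2, mul_le_mul_of_nonneg_left h2 (le_of_lt (mul_pos hn2 hn2))]
  -- m is in the spectrum
  have hmem : m ∈ spectrum ℝ H := by
    by_contra hns
    have hunit : IsUnit (algebraMap ℝ (Esp →L[ℝ] Esp) m - H) := spectrum.notMem_iff.mp hns
    obtain ⟨v, hv⟩ := hunit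
    set T : Esp →L[ℝ] Esp := algebraMap ℝ (Esp →L[ℝ] Esp) m - H with hT
    set R : Esp →L[ℝ] Esp := (↑v⁻¹ : Esp →L[ℝ] Esp) with hR
    have hmul : R * T = 1 := by
      rw [hR, ← hv]
      exact v.inv_mul
    have hRT : ∀ ψ : Esp, R (T ψ) = ψ := by
      intro ψ
      have : (R * T) ψ = (1 : Esp →L[ℝ] Esp) ψ := by rw [hmul]
      simpa [ContinuousLinearMap.mul_apply] using this
    have hTap : ∀ ψ : Esp, T ψ = m • ψ - H ψ := by
      intro ψ
      rw [hT]
      simp [Algebra.algebraMap_eq_smul_one]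
    set ε : ℝ := 1 / (‖R‖^2 * ‖T‖ + 1) with hε
    have hεpos : 0 < ε := by
      apply div_pos one_pos
      positivity
    obtain ⟨s, hsS, hslt⟩ := exists_lt_of_lt_csSup hSne (show m - ε < m by linarith)
    obtain ⟨ψ, hψ1, rfl⟩ := hsS
    set δ : ℝ := m - ⟪ψ, H ψ⟫ with hδ
    have hδ0 : 0 ≤ δ := by
      have := hmq ψ
      rw [hψ1] at this
      simp at this
      linarith
    have hδε : δ < ε := by rw [hδ]; linarith
    have hpos' : ∀ z : Esp, 0 ≤ m * ‖z‖^2 - ⟪z, H z⟫ := fun z => by linarith [hmq z]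
    -- key identity  B (Tψ) ψ = ‖Tψ‖²
    have hid : ∀ z w : Esp, m * ⟪z, w⟫ - ⟪z, H w⟫ = ⟪z, T w⟫ := by
      intro z w
      rw [hTap w, inner_sub_right, real_inner_smul_right]
    have key1 : m * ⟪T ψ, ψ⟫ - ⟪T ψ, H ψ⟫ = ‖T ψ‖^2 := by
      rw [hid (T ψ) ψ, real_inner_self_eq_norm_sq]
    have hcs := form_cs H hs m hpos' (T ψ) ψ
    have e : ⟪T ψ, T ψ⟫ = ‖T ψ‖^2 := real_inner_self_eq_norm_sq _
    have key2 : m * ‖T ψ‖^2 - ⟪T ψ, H (T ψ)⟫ ≤ ‖T‖ * ‖T ψ‖^2 := by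
      have h := hid (T ψ) (T ψ)
      rw [e] at h
      rw [h]
      calc ⟪T ψ, T (T ψ)⟫ ≤ ‖T ψ‖ * ‖T (T ψ)‖ := real_inner_le_norm _ _
        _ ≤ ‖T ψ‖ * (‖T‖ * ‖T ψ‖) :=
            mul_le_mul_of_nonneg_left (T.le_opNorm _) (norm_nonneg _)
        _ = ‖T‖ * ‖T ψ‖^2 := by ring
    have key3 : m * ‖ψ‖^2 - ⟪ψ, H ψ⟫ = δ := by rw [hψ1, hδ]; ring
    rw [key1, key3] at hcs
    -- hcs : (‖Tψ‖²)² ≤ (m‖Tψ‖² - ⟪Tψ,H Tψ⟫) * δ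
    have hTn : (0:ℝ) ≤ ‖T ψ‖ := norm_nonneg _
    have h14 : ‖T ψ‖^4 ≤ (‖T‖ * ‖T ψ‖^2) * δ := by
      calc ‖T ψ‖^4 = (‖T ψ‖^2)^2 := by ring
        _ ≤ (m * ‖T ψ‖^2 - ⟪T ψ, H (T ψ)⟫) * δ := hcs
        _ ≤ (‖T‖ * ‖T ψ‖^2) * δ := mul_le_mul_of_nonneg_right key2 hδ0
    have hone : (1:ℝ) = ‖ψ‖^2 := by rw [hψ1]; norm_num
    have hRb : ‖ψ‖ ≤ ‖R‖ * ‖T ψ‖ := by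
      conv_lhs => rw [← hRT ψ]
      exact R.le_opNorm _
    -- conclude contradiction
    rcases eq_or_lt_of_le hTn with h0 | h0
    · have : ψ = 0 := by
        rw [← hRT ψ]
        have : T ψ = 0 := by
          have := norm_eq_zero.mp h0.symm
          exact this
        rw [this, map_zero]
      rw [this] at hψ1
      simp at hψ1
    · have hT2 : ‖T ψ‖^2 ≤ ‖T‖ * δ := by
        have h4 : ‖T ψ‖^2 * ‖T ψ‖^2 ≤ (‖T‖ * δ) * ‖T ψ‖^2 := by nlinarith [h14]
        exact le_of_mul_le_mul_right h4 (by positivity)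
      have h1R : 1 ≤ ‖R‖^2 * ‖T ψ‖^2 := by nlinarith [hRb, hψ1, norm_nonneg R]
      have hfin : 1 ≤ ‖R‖^2 * ‖T‖ * δ := by nlinarith [norm_nonneg R]
      have hc1 : ‖R‖^2 * ‖T‖ * δ ≤ ‖R‖^2 * ‖T‖ * ε :=
        mul_le_mul_of_nonneg_left hδε.le (by positivity)
      have hεeq : (‖R‖^2 * ‖T‖ + 1) * ε = 1 := by
        rw [hε]
        field_simp
      nlinarith [hfin, hc1, hεpos, hεeq]
  -- contradiction: m ≤ Emax < m
  have hble : m ≤ Emax := by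
    rw [hEmax]
    apply le_csSup
    · refine ⟨‖H‖, fun x hx => ?_⟩
      have := spectrum.norm_le_norm_of_mem hx
      calc x ≤ |x| := le_abs_self x
        _ ≤ ‖H‖ := this
    · exact hmem
  linarith

end bound


end partC

section partD



/-- truncation of `v` to `Icc p q` as an element of `ℓ²`. -/
noncomputable def trial (v : ℤ → ℝ) (p q : ℤ) : Esp :=
  ∑ n ∈ Finset.Icc p q, lp.single 2 n (v n)

lemma trial_coord (v : ℤ → ℝ) (p q j : ℤ) :
    (trial v p q : ℤ → ℝ) j = if j ∈ Finset.Icc p q then v j else 0 := by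
  rw [trial, lp.coeFn_sum, Finset.sum_apply]
  rw [show (∑ n ∈ Finset.Icc p q, (lp.single 2 n (v n) : ℤ → ℝ) j)
      = ∑ n ∈ Finset.Icc p q, if j = n then v n else 0 from
    Finset.sum_congr rfl fun n _ => by
      by_cases h : j = n
      · subst h; simp [lp.single_apply_self]
      · rw [lp.single_apply]; simp [h]]
  rw [Finset.sum_ite_eq (Finset.Icc p q) j v]

lemma trial_inner (v : ℤ → ℝ) (p q : ℤ) (φ : Esp) :
    ⟪trial v p q, φ⟫ = ∑ n ∈ Finset.Icc p q, v n * φ n := by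
  rw [trial, sum_inner]
  refine Finset.sum_congr rfl fun n _ => ?_
  rw [lp.inner_single_left]
  simp [RCLike.inner_apply]
  ring

lemma trial_normsq (v : ℤ → ℝ) (p q : ℤ) :
    ‖trial v p q‖^2 = ∑ n ∈ Finset.Icc p q, v n * v n := by
  rw [← real_inner_self_eq_norm_sq, trial_inner]
  refine Finset.sum_congr rfl fun n hn => ?_
  rw [trial_coord, if_pos hn]

variable (V : ℤ → ℝ) (H : Esp →L[ℝ] Esp) (Emax : ℝ)
  (hH : ∀ ψ : Esp, ∀ n : ℤ, (H ψ : ∀ _ : ℤ, ℝ) n = ψ (n + 1) + ψ (n - 1) + V n * ψ n)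


include hH in
lemma trial_quad {v : ℤ → ℝ} (hv : IsSol V Emax v) {p q : ℤ} (hpq : p ≤ q) :
    ⟪trial v p q, H (trial v p q)⟫
      = Emax * (∑ n ∈ Finset.Icc p q, v n * v n) - v p * v (p-1) - v q * v (q+1) := by
  rw [trial_inner]
  have coord := trial_coord v p q
  have key : ∀ n ∈ Finset.Icc p q,
      v n * (H (trial v p q) : ℤ → ℝ) n
        = Emax * (v n * v n) - (if n = q then v q * v (q+1) else 0)
          - (if n = p then v p * v (p-1) else 0) := by
    intro n hn
    rw [Finset.mem_Icc] at hn
    rw [hH (trial v p q) n, coord (n+1), coord (n-1), coord n]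
    have hsol := hv n
    have hmul : (v (n+1) + v (n-1) + V n * v n) * v n = Emax * v n * v n := by
      rw [hsol]
    by_cases hnq : n = q <;> by_cases hnp : n = p
    · subst hnq; subst hnp
      rw [if_neg (by rw [Finset.mem_Icc]; omega), if_neg (by rw [Finset.mem_Icc]; omega),
        if_pos (by rw [Finset.mem_Icc]; omega), if_pos rfl, if_pos rfl]
      linarith [hmul]
    · subst hnq
      rw [if_neg (by rw [Finset.mem_Icc]; omega), if_pos (by rw [Finset.mem_Icc]; omega),
        if_pos (by rw [Finset.mem_Icc]; omega), if_pos rfl, if_neg hnp]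
      linarith [hmul]
    · subst hnp
      rw [if_pos (by rw [Finset.mem_Icc]; omega), if_neg (by rw [Finset.mem_Icc]; omega),
        if_pos (by rw [Finset.mem_Icc]; omega), if_neg hnq, if_pos rfl]
      linarith [hmul]
    · rw [if_pos (by rw [Finset.mem_Icc]; omega), if_pos (by rw [Finset.mem_Icc]; omega),
        if_pos (by rw [Finset.mem_Icc]; omega), if_neg hnq, if_neg hnp]
      linarith [hmul]
  rw [Finset.sum_congr rfl key]
  rw [Finset.sum_sub_distrib, Finset.sum_sub_distrib, ← Finset.mul_sum]
  rw [Finset.sum_ite_eq' (Finset.Icc p q) q (fun _ => v q * v (q+1)),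
    Finset.sum_ite_eq' (Finset.Icc p q) p (fun _ => v p * v (p-1)),
    if_pos (by rw [Finset.mem_Icc]; omega), if_pos (by rw [Finset.mem_Icc]; omega)]
  ring

include hH in
/-- The key sign inequality: for `a < b`, `v (a+1) v a + v b v (b+1) ≥ 0`. -/
lemma star (hq : ∀ ψ : Esp, ⟪ψ, H ψ⟫ ≤ Emax * ‖ψ‖^2) {v : ℤ → ℝ} (hv : IsSol V Emax v)
    {a b : ℤ} (hab : a < b) : 0 ≤ v (a+1) * v a + v b * v (b+1) := by
  have h1 := trial_quad V H Emax hH hv (show a+1 ≤ b by omega)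
  have h2 := hq (trial v (a+1) b)
  rw [trial_normsq] at h2
  rw [h1] at h2
  have e : a + 1 - 1 = a := by ring
  rw [e] at h2
  linarith


end partD


section partE
variable (V : ℤ → ℝ) (H : Esp →L[ℝ] Esp) (Emax : ℝ)
  (hH : ∀ ψ : Esp, ∀ n : ℤ, (H ψ : ∀ _ : ℤ, ℝ) n = ψ (n + 1) + ψ (n - 1) + V n * ψ n)
  (hs : ∀ x y : Esp, ⟪H x, y⟫ = ⟪x, H y⟫)
  (hq : ∀ ψ : Esp, ⟪ψ, H ψ⟫ ≤ Emax * ‖ψ‖^2)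

include hH hs hq in
lemma no_two_zeros {v : ℤ → ℝ} (hv : IsSol V Emax v) (hvn : ¬∀ n, v n = 0)
    {a b : ℤ} (hab : a < b) (ha : v a = 0) (hb : v b = 0) : False := by
  rcases eq_or_lt_of_le (show a + 1 ≤ b by omega) with heq | hlt
  · exact hvn (eq_zero_of_consec V Emax hv ha (by rw [heq]; exact hb))
  · have hpq : a+1 ≤ b-1 := by omega
    set ψ : Esp := trial v (a+1) (b-1) with hψ
    have hform : Emax * ‖ψ‖^2 - ⟪ψ, H ψ⟫ = 0 := by
      rw [hψ, trial_normsq, trial_quad V H Emax hH hv hpq,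
        show a+1-1 = a by ring, show b-1+1 = b by ring, ha, hb]
      ring
    set z : Esp := Emax • ψ - H ψ with hz
    have hid : Emax * ⟪z, ψ⟫ - ⟪z, H ψ⟫ = ⟪z, Emax • ψ - H ψ⟫ := by
      rw [inner_sub_right, real_inner_smul_right]
    have hpos : ∀ w : Esp, 0 ≤ Emax * ‖w‖^2 - ⟪w, H w⟫ := fun w => by linarith [hq w]
    have hcs := form_cs H hs Emax hpos z ψ
    have h1 : Emax * ⟪z, ψ⟫ - ⟪z, H ψ⟫ = ‖z‖^2 := by
      rw [hid, ← hz, real_inner_self_eq_norm_sq]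
    rw [h1, hform, mul_zero] at hcs
    have hz0 : Emax • ψ - H ψ = 0 := by
      rw [← hz]
      have h2 : ‖z‖^2 = 0 := le_antisymm (by nlinarith [hcs]) (sq_nonneg _)
      exact norm_eq_zero.mp (pow_eq_zero_iff (n := 2) (by norm_num) |>.mp h2)
    have hHψ : H ψ = Emax • ψ := (sub_eq_zero.mp hz0).symm
    have hco : (H ψ : ℤ → ℝ) a = ((Emax • ψ : Esp) : ℤ → ℝ) a := by rw [hHψ]
    rw [hH ψ a] at hco
    have c1 : (ψ : ℤ → ℝ) (a+1) = v (a+1) := by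
      rw [hψ, trial_coord, if_pos (by rw [Finset.mem_Icc]; omega)]
    have c2 : (ψ : ℤ → ℝ) (a-1) = 0 := by
      rw [hψ, trial_coord, if_neg (by rw [Finset.mem_Icc]; omega)]
    have c3 : (ψ : ℤ → ℝ) a = 0 := by
      rw [hψ, trial_coord, if_neg (by rw [Finset.mem_Icc]; omega)]
    have c4 : ((Emax • ψ : Esp) : ℤ → ℝ) a = Emax * (ψ : ℤ → ℝ) a := by
      rw [lp.coeFn_smul]; rfl
    rw [c1, c2, c3, c4, c3] at hco
    have hva1 : v (a+1) = 0 := by linarith [hco]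
    exact hvn (eq_zero_of_consec V Emax hv ha hva1)

end partE

section partF

/-- If `|u| ≥ δ v` on a tail and `v > 0` on `[1,∞)`, the subordination ratio cannot go to 0. -/
lemma not_subordinate {v u : ℤ → ℝ} (hvpos : ∀ n : ℤ, 1 ≤ n → 0 < v n)
    {δ : ℝ} (hδ : 0 < δ) {N₀ : ℤ} (hN₀ : 1 ≤ N₀)
    (hdom : ∀ n : ℤ, N₀ ≤ n → δ * v n ≤ |u n|) :
    ¬ Filter.Tendsto (fun N : ℕ => (∑ n ∈ Finset.Icc (1 : ℤ) (N : ℤ), u n ^ 2) /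
        (∑ n ∈ Finset.Icc (1 : ℤ) (N : ℤ), v n ^ 2)) Filter.atTop (nhds 0) := by
  intro htend
  set D : ℕ → ℝ := fun N => ∑ n ∈ Finset.Icc (1:ℤ) (N:ℤ), v n ^2 with hD
  set U : ℕ → ℝ := fun N => ∑ n ∈ Finset.Icc (1:ℤ) (N:ℤ), u n ^2 with hU
  have hIcc : ∀ N : ℤ, Finset.Icc (1:ℤ) N = Finset.Ioc (0:ℤ) N := by
    intro N; ext x; simp only [Finset.mem_Icc, Finset.mem_Ioc]; omega
  have Dpos : ∀ N : ℕ, 1 ≤ N → 0 < D N := by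
    intro N hN
    refine Finset.sum_pos' (fun i _ => sq_nonneg _) ⟨1, Finset.mem_Icc.mpr ⟨le_refl _, by exact_mod_cast hN⟩, ?_⟩
    have := hvpos 1 (le_refl _)
    positivity
  have Dnonneg : ∀ N : ℕ, 0 ≤ D N := fun N => Finset.sum_nonneg (fun i _ => sq_nonneg _)
  have Dmono : Monotone D := by
    intro N M hNM
    exact Finset.sum_le_sum_of_subset_of_nonneg
      (Finset.Icc_subset_Icc_right (by exact_mod_cast hNM)) (fun i _ _ => sq_nonneg _)
  set M : ℕ := N₀.toNat with hMdef
  have hM : (M:ℤ) = N₀ := Int.toNat_of_nonneg (by omega)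
  have hM1 : 1 ≤ M := by omega
  have split : ∀ N : ℕ, M ≤ N → D N - D M = ∑ n ∈ Finset.Ioc N₀ (N:ℤ), v n ^2 := by
    intro N hN
    have hdisj : Disjoint (Finset.Ioc (0:ℤ) N₀) (Finset.Ioc N₀ (N:ℤ)) := by
      refine Finset.disjoint_left.mpr ?_
      intro x hx1 hx2
      rw [Finset.mem_Ioc] at hx1 hx2
      omega
    have hun : Finset.Ioc (0:ℤ) N₀ ∪ Finset.Ioc N₀ (N:ℤ) = Finset.Ioc 0 (N:ℤ) :=
      Finset.Ioc_union_Ioc_eq_Ioc (by omega) (by omega)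
    have hc : (∑ n ∈ Finset.Ioc (0:ℤ) N₀, v n^2) + (∑ n ∈ Finset.Ioc N₀ (N:ℤ), v n^2)
        = ∑ n ∈ Finset.Ioc (0:ℤ) (N:ℤ), v n^2 := by
      rw [← Finset.sum_union hdisj, hun]
    rw [hD]
    simp only
    rw [hIcc, hIcc, ← hc, hM]
    ring
  have Ubound : ∀ N : ℕ, M ≤ N → δ^2 * (D N - D M) ≤ U N := by
    intro N hN
    rw [split N hN, Finset.mul_sum]
    calc ∑ n ∈ Finset.Ioc N₀ (N:ℤ), δ^2 * v n ^2
        ≤ ∑ n ∈ Finset.Ioc N₀ (N:ℤ), u n ^2 := by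
          refine Finset.sum_le_sum fun i hi => ?_
          rw [Finset.mem_Ioc] at hi
          have h1 := hdom i (le_of_lt hi.1)
          have h2 := hvpos i (by omega)
          nlinarith [mul_self_le_mul_self (by positivity : (0:ℝ) ≤ δ * v i) h1,
            sq_abs (u i), abs_nonneg (u i)]
      _ ≤ U N := by
          refine Finset.sum_le_sum_of_subset_of_nonneg ?_ (fun i _ _ => sq_nonneg _)
          intro x hx
          rw [Finset.mem_Ioc] at hx
          rw [Finset.mem_Icc]
          omega
  have Ulow : ∀ N : ℕ, N₀ ≤ (N:ℤ) → δ^2 * v N₀ ^2 ≤ U N := by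
    intro N hN
    have hmem : N₀ ∈ Finset.Icc (1:ℤ) (N:ℤ) := Finset.mem_Icc.mpr ⟨hN₀, hN⟩
    have h1 : u N₀ ^2 ≤ U N := Finset.single_le_sum (fun i _ => sq_nonneg (u i)) hmem
    have h2 := hdom N₀ (le_refl _)
    nlinarith [mul_self_le_mul_self (mul_nonneg hδ.le (hvpos N₀ hN₀).le) h2,
      sq_abs (u N₀), abs_nonneg (u N₀), hvpos N₀ hN₀]
  by_cases hbdd : BddAbove (Set.range D)
  · obtain ⟨K, hK⟩ := hbdd
    have hK' : ∀ N, D N ≤ K := fun N => hK (Set.mem_range_self N)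
    have hKpos : 0 < K := lt_of_lt_of_le (Dpos 1 (le_refl _)) (hK' 1)
    have hvN₀ := hvpos N₀ hN₀
    set ε : ℝ := δ^2 * v N₀ ^2 / K with hε
    have hεpos : 0 < ε := div_pos (mul_pos (pow_pos hδ 2) (pow_pos hvN₀ 2)) hKpos
    obtain ⟨Nb, hNb⟩ := Metric.tendsto_atTop.mp htend ε hεpos
    set N : ℕ := max Nb (M+1) with hNdef
    have hNM : N₀ ≤ (N:ℤ) := by
      have : M + 1 ≤ N := le_max_right _ _
      omega
    have h1 := hNb N (le_max_left _ _)
    rw [Real.dist_eq, sub_zero] at h1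
    have hDN : 0 < D N := Dpos N (by omega)
    have h2 : ε ≤ U N / D N := by
      have ha : U N / K ≤ U N / D N := by
        apply div_le_div_of_nonneg_left _ hDN (hK' N)
        calc (0:ℝ) ≤ δ^2 * v N₀^2 := by positivity
          _ ≤ U N := Ulow N hNM
      have hb : ε ≤ U N / K := by
        rw [hε]
        exact (div_le_div_iff_of_pos_right hKpos).mpr (Ulow N hNM)
      linarith
    have h3 : U N / D N < ε := lt_of_abs_lt h1
    linarith
  · have hDtop : Filter.Tendsto D Filter.atTop Filter.atTop :=
      Filter.tendsto_atTop_atTop_of_monotone' Dmono hbdd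
    have e1 : ∀ᶠ N : ℕ in Filter.atTop, 2 * D M ≤ D N := hDtop.eventually_ge_atTop _
    have e2 : ∀ᶠ N : ℕ in Filter.atTop,
        (fun N : ℕ => U N / D N) N < δ^2/2 := by
      have := htend.eventually (eventually_lt_nhds (show (0:ℝ) < δ^2/2 by positivity))
      exact this
    have e3 : ∀ᶠ N : ℕ in Filter.atTop, M ≤ N := Filter.eventually_ge_atTop M
    obtain ⟨N, ⟨hN1, hN2⟩, hN3⟩ := ((e1.and e2).and e3).exists
    have hDN : 0 < D N := Dpos N (by omega)
    have hUb := Ubound N hN3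
    have hgoal : δ^2/2 ≤ U N / D N := by
      rw [le_div_iff₀ hDN]
      nlinarith [hUb, Dnonneg M]
    linarith
end partF


section partG
variable (V : ℤ → ℝ) (H : Esp →L[ℝ] Esp) (Emax : ℝ)
  (hH : ∀ ψ : Esp, ∀ n : ℤ, (H ψ : ∀ _ : ℤ, ℝ) n = ψ (n + 1) + ψ (n - 1) + V n * ψ n)
  (hs : ∀ x y : Esp, ⟪H x, y⟫ = ⟪x, H y⟫)
  (hq : ∀ ψ : Esp, ⟪ψ, H ψ⟫ ≤ Emax * ‖ψ‖^2)

include hH hs hq in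
lemma tail_sign (u : ℤ → ℝ) (husol : IsSol V Emax u)
    (hsub : ∀ ut : ℤ → ℝ,
      (∀ n : ℤ, ut (n + 1) + ut (n - 1) + V n * ut n = Emax * ut n) →
      (¬ ∃ c : ℝ, ut = fun n => c * u n) →
      Filter.Tendsto
        (fun N : ℕ => (∑ n ∈ Finset.Icc (1 : ℤ) (N : ℤ), u n ^ 2) /
          (∑ n ∈ Finset.Icc (1 : ℤ) (N : ℤ), ut n ^ 2))
        Filter.atTop (nhds 0))
    (k : ℤ) (hk : k ≤ 0) (hu0 : u k ≠ 0) :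
    (∀ n, k+1 ≤ n → 0 < u n) ∨ (∀ n, k+1 ≤ n → u n < 0) := by
  set v : ℤ → ℝ := wsol (fun n => Emax - V n) k with hvdef
  have hvsol : IsSol V Emax v := wsol_isSol V Emax k
  have hv0 : v k = 0 := wsol_zero _ k
  have hv1 : v (k+1) = 1 := wsol_one _ k
  have hvne : ¬∀ n, v n = 0 := by
    intro h
    have := hv1
    rw [h (k+1)] at this
    norm_num at this
  -- positivity of v on [k+1, ∞)
  have hvpos : ∀ n, k+1 ≤ n → 0 < v n := by
    have key : ∀ m : ℕ, 0 < v (k+1+(m:ℤ)) := by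
      intro m
      induction m with
      | zero =>
        rw [show k+1+((0:ℕ):ℤ) = k+1 by simp, hv1]
        norm_num
      | succ m ih =>
        rw [show k+1+((m+1:ℕ):ℤ) = k+1+(m:ℤ)+1 by push_cast; ring]
        by_contra hle
        push_neg at hle
        rcases eq_or_lt_of_le hle with heq | hlt
        · exact no_two_zeros V H Emax hH hs hq hvsol hvne
            (show k < k+1+(m:ℤ)+1 by omega) hv0 heq
        · have hstar := star V H Emax hH hq hvsol (show k < k+1+(m:ℤ) by omega)
          rw [hv0, mul_zero, zero_add] at hstar
          nlinarith [ih, hlt, hstar]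
    intro n hn
    obtain ⟨m, rfl⟩ : ∃ m : ℕ, n = k+1+(m:ℤ) := ⟨(n-k-1).toNat, by omega⟩
    exact key m
  have hvpos1 : ∀ n : ℤ, 1 ≤ n → 0 < v n := fun n hn => hvpos n (by omega)
  -- v is not a multiple of u
  have hnm : ¬∃ c0 : ℝ, v = fun n => c0 * u n := by
    rintro ⟨c0, hc0⟩
    have h1 : v k = c0 * u k := by rw [hc0]
    rw [hv0] at h1
    have hc00 : c0 = 0 := by
      rcases mul_eq_zero.mp h1.symm with h | h
      · exact h
      · exact absurd h hu0
    have h2 : v (k+1) = c0 * u (k+1) := by rw [hc0]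
    rw [hv1, hc00] at h2
    norm_num at h2
  have htend := hsub v hvsol hnm
  -- main step, for a solution negative at k
  have main : ∀ w : ℤ → ℝ, IsSol V Emax w → w k < 0 →
      Filter.Tendsto
        (fun N : ℕ => (∑ n ∈ Finset.Icc (1 : ℤ) (N : ℤ), w n ^ 2) /
          (∑ n ∈ Finset.Icc (1 : ℤ) (N : ℤ), v n ^ 2))
        Filter.atTop (nhds 0) →
      ∀ n, k+1 ≤ n → w n < 0 := by
    intro w hwsol hwk htendw
    by_contra hcon
    push_neg at hcon
    obtain ⟨n₀, hn₀1, hn₀2⟩ := hcon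
    have hWw : ∀ n : ℤ, w (n+1) * v n - w n * v (n+1) = - w k := by
      intro n
      have h1 := wronskian_const V Emax hwsol hvsol n
      have h2 := wronskian_const V Emax hwsol hvsol k
      rw [hv0, hv1] at h2
      rw [h1]
      linarith [h2]
    have rstep : ∀ n, k+1 ≤ n → w n / v n < w (n+1) / v (n+1) := by
      intro n hn
      rw [div_lt_div_iff₀ (hvpos n hn) (hvpos (n+1) (by omega))]
      have := hWw n
      nlinarith [this, hwk]
    have rmono : ∀ n, k+1 ≤ n → ∀ m, n ≤ m → w n / v n ≤ w m / v m := by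
      intro n hn
      refine Int.le_induction ?_ ?_
      · exact le_refl _
      · intro m hm ih
        exact ih.trans (rstep m (by omega)).le
    have hr0 : 0 ≤ w n₀ / v n₀ := div_nonneg hn₀2 (hvpos n₀ hn₀1).le
    have hδ' : 0 < w (n₀+1) / v (n₀+1) := lt_of_le_of_lt hr0 (rstep n₀ hn₀1)
    have hdom : ∀ n : ℤ, max (n₀+1) 1 ≤ n → (w (n₀+1) / v (n₀+1)) * v n ≤ |w n| := by
      intro n hn
      have hn' : n₀+1 ≤ n := le_trans (le_max_left _ _) hn
      have h1 : w (n₀+1) / v (n₀+1) ≤ w n / v n := rmono (n₀+1) (by omega) n hn'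
      have hvn := hvpos n (by omega)
      have h2 : (w (n₀+1) / v (n₀+1)) * v n ≤ w n := (le_div_iff₀ hvn).mp h1
      exact h2.trans (le_abs_self _)
    exact not_subordinate hvpos1 hδ' (le_max_right (n₀+1) 1) hdom htendw
  rcases lt_or_gt_of_ne hu0 with hneg | hpos
  · exact Or.inr (main u husol hneg htend)
  · left
    have hnegu : IsSol V Emax (fun n => - u n) := by
      intro n
      have := husol n
      simp only
      linarith
    have htend' : Filter.Tendsto
        (fun N : ℕ => (∑ n ∈ Finset.Icc (1 : ℤ) (N : ℤ), (- u n) ^ 2) /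
          (∑ n ∈ Finset.Icc (1 : ℤ) (N : ℤ), v n ^ 2))
        Filter.atTop (nhds 0) := by
      have he : (fun N : ℕ => (∑ n ∈ Finset.Icc (1 : ℤ) (N : ℤ), (- u n) ^ 2) /
          (∑ n ∈ Finset.Icc (1 : ℤ) (N : ℤ), v n ^ 2))
          = (fun N : ℕ => (∑ n ∈ Finset.Icc (1 : ℤ) (N : ℤ), u n ^ 2) /
          (∑ n ∈ Finset.Icc (1 : ℤ) (N : ℤ), v n ^ 2)) := by
        funext N
        congr 1
        exact Finset.sum_congr rfl fun i _ => by ring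
      rw [he]
      exact htend
    have := main (fun n => - u n) hnegu (by simp; linarith) htend'
    intro n hn
    have h := this n hn
    linarith

end partG

end Stmt16



/-- Let `H` be the bounded self-adjoint Schrödinger operator on `ℓ²(ℤ)` with
bounded potential `V`, and `E_max = max σ(H)`. If `u⁺` is a nontrivial real solution of the
difference equation at `E_max` that is subordinate at `+∞`, then after multiplication by a
suitable nonzero constant, `u⁺(n) > 0` for all `n`. -/
theorem stmt16 (V : ℤ → ℝ) (hV : ∃ M : ℝ, ∀ n, |V n| ≤ M)
    (H : lp (fun _ : ℤ => ℝ) 2 →L[ℝ] lp (fun _ : ℤ => ℝ) 2)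
    (hH : ∀ ψ : lp (fun _ : ℤ => ℝ) 2, ∀ n : ℤ,
      (H ψ : ∀ _ : ℤ, ℝ) n = ψ (n + 1) + ψ (n - 1) + V n * ψ n)
    (Emax : ℝ) (hEmax : Emax = sSup (spectrum ℝ H))
    (u : ℤ → ℝ) (hune : u ≠ 0)
    (hsol : ∀ n : ℤ, u (n + 1) + u (n - 1) + V n * u n = Emax * u n)
    (hsub : ∀ ut : ℤ → ℝ,
      (∀ n : ℤ, ut (n + 1) + ut (n - 1) + V n * ut n = Emax * ut n) →
      (¬ ∃ c : ℝ, ut = fun n => c * u n) →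
      Filter.Tendsto
        (fun N : ℕ => (∑ n ∈ Finset.Icc (1 : ℤ) (N : ℤ), u n ^ 2) /
          (∑ n ∈ Finset.Icc (1 : ℤ) (N : ℤ), ut n ^ 2))
        Filter.atTop (nhds 0)) :
    ∃ c : ℝ, c ≠ 0 ∧ ∀ n : ℤ, 0 < c * u n := by
  classical
  obtain ⟨M0, hM0⟩ := hV
  have hs := Stmt16.H_symm V H hH hM0
  have hq := Stmt16.quad_bound V H hH hs Emax hEmax
  have husol : Stmt16.IsSol V Emax u := hsol
  have hune' : ¬∀ n, u n = 0 := fun h => hune (funext h)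
  have hnozero : ∀ n : ℤ, u n ≠ 0 := by
    intro k₀ hk₀
    have hk : min (k₀ - 1) 0 ≤ 0 := min_le_right _ _
    have hmin := min_le_left (k₀ - 1) 0
    have hkk₀ : min (k₀ - 1) 0 < k₀ := by omega
    have huk : u (min (k₀ - 1) 0) ≠ 0 := by
      intro h
      exact Stmt16.no_two_zeros V H Emax hH hs hq husol hune' hkk₀ h hk₀
    rcases Stmt16.tail_sign V H Emax hH hs hq u husol hsub (min (k₀-1) 0) hk huk with hp | hn
    · exact (ne_of_gt (hp k₀ (by omega))) hk₀
    · exact (ne_of_lt (hn k₀ (by omega))) hk₀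
  rcases lt_or_gt_of_ne (hnozero 1) with h1neg | h1pos
  · refine ⟨-1, by norm_num, ?_⟩
    intro n
    have hk : min (n - 1) 0 ≤ 0 := min_le_right _ _
    have hmin := min_le_left (n - 1) 0
    rcases Stmt16.tail_sign V H Emax hH hs hq u husol hsub (min (n-1) 0) hk (hnozero _)
      with hp | hn
    · exact absurd (hp 1 (by omega)) (not_lt.mpr h1neg.le)
    · have := hn n (by omega)
      nlinarith [this]
  · refine ⟨1, one_ne_zero, ?_⟩
    intro n
    have hk : min (n - 1) 0 ≤ 0 := min_le_right _ _
    have hmin := min_le_left (n - 1) 0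
    rcases Stmt16.tail_sign V H Emax hH hs hq u husol hsub (min (n-1) 0) hk (hnozero _)
      with hp | hn
    · have := hp n (by omega)
      linarith [this]
    · exact absurd (hn 1 (by omega)) (not_lt.mpr h1pos.le)
end

section
/- Let λ > 0 and C > 1, and suppose a continuous function φ : [1/2,5] → ℝ satisfies C^{−1}λ < φ(x) < Cλ for all x. Define F(x) = 2 + φ(x) − 1/x. Then for λ sufficiently small, F has at least two fixed points x_att, x_rep in [1/2,5], and there exist constants C^#, C^{##} > 0 independent of λ such that every fixed point x of F with x > 1 satisfies 1 + C^#√λ < x < 1 + C^{##}√λ, and every fixed point with x < 1 satisfies 1 − C^{##}√λ < x < 1 − C^{#}√λ. -/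
/-- For `F(x) = 2 + φ(x) − 1/x` with continuous `φ` satisfying
`C⁻¹λ < φ < Cλ` on `[1/2, 5]`, for `λ` sufficiently small `F` has at least two fixed points
in `[1/2, 5]`, and there are constants `C^#, C^{##} > 0` independent of `λ` such that every
fixed point `x > 1` satisfies `1 + C^#√λ < x < 1 + C^{##}√λ` and every fixed point `x < 1`
satisfies `1 − C^{##}√λ < x < 1 − C^#√λ`. -/
theorem stmt19 (C : ℝ) (hC : 1 < C) :
    ∃ Csharp > (0 : ℝ), ∃ Csharp2 > (0 : ℝ), ∃ lam0 > (0 : ℝ),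
      ∀ lam : ℝ, 0 < lam → lam < lam0 →
      ∀ φ : ℝ → ℝ, ContinuousOn φ (Set.Icc (1 / 2 : ℝ) 5) →
        (∀ x ∈ Set.Icc (1 / 2 : ℝ) 5, C⁻¹ * lam < φ x ∧ φ x < C * lam) →
        (∃ xatt ∈ Set.Icc (1 / 2 : ℝ) 5, ∃ xrep ∈ Set.Icc (1 / 2 : ℝ) 5,
          xatt ≠ xrep ∧
          2 + φ xatt - 1 / xatt = xatt ∧ 2 + φ xrep - 1 / xrep = xrep) ∧
        (∀ x ∈ Set.Icc (1 / 2 : ℝ) 5, 2 + φ x - 1 / x = x →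
          (1 < x → 1 + Csharp * Real.sqrt lam < x ∧ x < 1 + Csharp2 * Real.sqrt lam) ∧
          (x < 1 → 1 - Csharp2 * Real.sqrt lam < x ∧ x < 1 - Csharp * Real.sqrt lam)) := by
  have hC0 : (0:ℝ) < C := lt_trans one_pos hC
  refine ⟨Real.sqrt (1/(2*C)), Real.sqrt_pos.2 (by positivity),
    Real.sqrt (5*C), Real.sqrt_pos.2 (by positivity),
    1/(2*C), by positivity, ?_⟩
  intro lam hlam hlam0 φ hφc hφb
  have hClam : C * lam < 1/2 := by
    have := mul_lt_mul_of_pos_left hlam0 hC0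
    rw [mul_one_div] at this
    calc C * lam < C / (2*C) := this
      _ = 1/2 := by field_simp
  have hCinv : (0:ℝ) < C⁻¹ * lam := by positivity
  -- key equation for fixed points
  have key : ∀ x ∈ Set.Icc (1/2:ℝ) 5, 2 + φ x - 1 / x = x → (x-1)^2 = φ x * x := by
    intro x hx hfx
    have hx0 : x ≠ 0 := by
      have := hx.1; intro h; rw [h] at this; norm_num at this
    field_simp at hfx
    nlinarith [hfx]
  constructor
  · -- existence of two fixed points
    set g : ℝ → ℝ := fun x => (2 + φ x) * x - 1 - x^2 with hg
    have hgc : ContinuousOn g (Set.Icc (1/2:ℝ) 5) :=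
      (((continuousOn_const.add hφc).mul continuousOn_id).sub continuousOn_const).sub
        (continuousOn_id.pow 2)
    have h1m : (1:ℝ) ∈ Set.Icc (1/2:ℝ) 5 := by norm_num
    have hg1 : 0 < g 1 := by
      have := (hφb 1 h1m).1
      simp only [hg]
      nlinarith
    have hghalf : g (1/2) < 0 := by
      have := (hφb (1/2) (by norm_num)).2
      simp only [hg]
      nlinarith
    have hg5 : g 5 < 0 := by
      have := (hφb 5 (by norm_num)).2
      simp only [hg]
      nlinarith
    have sub1 : Set.Icc (1/2:ℝ) 1 ⊆ Set.Icc (1/2:ℝ) 5 := Set.Icc_subset_Icc le_rfl (by norm_num)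
    have sub2 : Set.Icc (1:ℝ) 5 ⊆ Set.Icc (1/2:ℝ) 5 := Set.Icc_subset_Icc (by norm_num) le_rfl
    have hrep : (0:ℝ) ∈ g '' Set.Icc (1/2:ℝ) 1 := by
      apply intermediate_value_Icc (by norm_num) (hgc.mono sub1)
      exact ⟨le_of_lt hghalf, le_of_lt hg1⟩
    have hatt : (0:ℝ) ∈ g '' Set.Icc (1:ℝ) 5 := by
      apply intermediate_value_Icc' (by norm_num) (hgc.mono sub2)
      exact ⟨le_of_lt hg5, le_of_lt hg1⟩
    obtain ⟨xr, hxr, hgxr⟩ := hrep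
    obtain ⟨xa, hxa, hgxa⟩ := hatt
    have hxr0 : (0:ℝ) < xr := lt_of_lt_of_le (by norm_num) hxr.1
    have hxa0 : (0:ℝ) < xa := lt_of_lt_of_le (by norm_num) hxa.1
    have hfxa : 2 + φ xa - 1 / xa = xa := by
      have hxa0' : xa ≠ 0 := ne_of_gt hxa0
      simp only [hg] at hgxa
      field_simp
      nlinarith
    have hfxr : 2 + φ xr - 1 / xr = xr := by
      have hxr0' : xr ≠ 0 := ne_of_gt hxr0
      simp only [hg] at hgxr
      field_simp
      nlinarith
    refine ⟨xa, sub2 hxa, xr, sub1 hxr, ?_, hfxa, hfxr⟩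
    intro h
    have : xr = 1 := le_antisymm hxr.2 (h ▸ hxa.1)
    rw [this] at hgxr
    linarith
  · -- localization of fixed points
    intro x hx hfx
    have heq := key x hx hfx
    have hφx := hφb x hx
    have hx1 : (1/2:ℝ) ≤ x := hx.1
    have hx5 : x ≤ 5 := hx.2
    have hs1 : (Real.sqrt (1/(2*C)))^2 = 1/(2*C) := Real.sq_sqrt (by positivity)
    have hs2 : (Real.sqrt (5*C))^2 = 5*C := Real.sq_sqrt (by positivity)
    have hsl : (Real.sqrt lam)^2 = lam := Real.sq_sqrt (le_of_lt hlam)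
    have hCinv2 : 1/(2*C) * lam < C⁻¹ * lam := by
      apply mul_lt_mul_of_pos_right _ hlam
      rw [one_div, inv_eq_one_div, inv_eq_one_div]
      apply div_lt_div_of_pos_left one_pos hC0
      linarith
    have hxpos : (0:ℝ) < x := by linarith
    have hlow : (Real.sqrt (1/(2*C)) * Real.sqrt lam)^2 < (x-1)^2 := by
      rw [mul_pow, hs1, hsl, heq]
      calc (1/(2*C))*lam = (C⁻¹*lam)*(1/2) := by ring
        _ ≤ (C⁻¹*lam)*x := by nlinarith
        _ < φ x * x := by nlinarith [mul_lt_mul_of_pos_right hφx.1 hxpos]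
    have hupp : (x-1)^2 < (Real.sqrt (5*C) * Real.sqrt lam)^2 := by
      rw [mul_pow, hs2, hsl, heq]
      have := hφx.2
      have hφpos : 0 < φ x := lt_trans hCinv hφx.1
      nlinarith
    have hsnn : (0:ℝ) ≤ Real.sqrt (5*C) * Real.sqrt lam := by positivity
    constructor
    · intro hx1'
      have hlb : Real.sqrt (1/(2*C)) * Real.sqrt lam < x - 1 :=
        lt_of_pow_lt_pow_left₀ 2 (by linarith) hlow
      have hub : x - 1 < Real.sqrt (5*C) * Real.sqrt lam :=
        lt_of_pow_lt_pow_left₀ 2 hsnn hupp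
      exact ⟨by linarith, by linarith⟩
    · intro hx1'
      have hlb : Real.sqrt (1/(2*C)) * Real.sqrt lam < 1 - x := by
        have : (Real.sqrt (1/(2*C)) * Real.sqrt lam)^2 < (1-x)^2 := by
          rw [show (1-x)^2 = (x-1)^2 by ring]; exact hlow
        exact lt_of_pow_lt_pow_left₀ 2 (by linarith) this
      have hub : 1 - x < Real.sqrt (5*C) * Real.sqrt lam := by
        have : (1-x)^2 < (Real.sqrt (5*C) * Real.sqrt lam)^2 := by
          rw [show (1-x)^2 = (x-1)^2 by ring]; exact hupp
        exact lt_of_pow_lt_pow_left₀ 2 hsnn this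
      exact ⟨by linarith, by linarith⟩
end
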